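/- arXiv:2305.00728 — 4 statements merged into one kernel-verified Lean document; each statement's English description precedes it below -/
import Mathlib

section
/- For γ = 2, the radial principal eigenvalue of the Pucci maximal operator satisfies λ̄'_2(𝓜⁺) = Λ·(Ñ₊−2)²/4. Moreover the function u(r) = r^{−(Ñ₊−2)/2}·(−ln r) is positive on (0,1), satisfies u(1) = 0, and solves 𝓜⁺[u](r) + Λ·((Ñ₊−2)/2)²·u(r)·r^{−2} = 0 for all r ∈ (0,1). -/
/-!
Write `Ñ₊ - 1 = 2α + 1`. The function `u = r ^ (-α) (-log r)` is convex and decreasing on `(0, 1)`,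
so `𝓜⁺[u] = Λ (u'' + (2α + 1) u' / r)`; and `u` is the second solution of the Euler equation
`r² u'' + (2α + 1) r u' + α² u = 0` attached to the double root `-α` of its indicial polynomial.

Conversely `𝓜⁺[u] ≥ Λ u'' + λ (N - 1) u' / r`, so a positive supersolution for `μ` is a positive
supersolution of the Euler operator with `α²` replaced by `μ / Λ`. In the variable `t = log r`,
`v(t) = e^{αt} u(e^t)` then satisfies `v'' + (μ / Λ - α²) v ≤ 0` on `t < 0`. If `μ / Λ > α²`,
the Wronskian of `v` with `sin (β (t - a))`, `β² = μ / Λ - α²`, is nondecreasing on an interval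
of length `π / β`, which forces `v` to be nonpositive at one of its endpoints.
-/

open Set Real Filter MeasureTheory

noncomputable section

/-- The radial expression of the Pucci maximal operator `𝓜⁺` applied to a radial
function `u = u(r)`. -/
def pucciP (lam Lam : ℝ) (N : ℕ) (u : ℝ → ℝ) (r : ℝ) : ℝ :=
  Lam * max (deriv (deriv u) r) 0 - lam * max (-(deriv (deriv u) r)) 0 +
  ((N : ℝ) - 1) * (Lam * max (deriv u r / r) 0 - lam * max (-(deriv u r / r)) 0)

/-- The radial expression of the Pucci minimal operator `𝓜⁻` applied to a radial
function `u = u(r)`. -/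
def pucciM (lam Lam : ℝ) (N : ℕ) (u : ℝ → ℝ) (r : ℝ) : ℝ :=
  lam * max (deriv (deriv u) r) 0 - Lam * max (-(deriv (deriv u) r)) 0 +
  ((N : ℝ) - 1) * (lam * max (deriv u r / r) 0 - Lam * max (-(deriv u r / r)) 0)

/-- The radial principal eigenvalue `λ̄'_γ` on the punctured unit ball for a radial
operator `Op`. -/
def radialEVop (Op : (ℝ → ℝ) → ℝ → ℝ) (γ : ℝ) : ℝ :=
  sSup {μ : ℝ | ∃ u : ℝ → ℝ, ContDiffOn ℝ 2 u (Ioo 0 1) ∧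
    (∀ r ∈ Ioo (0:ℝ) 1, 0 < u r) ∧
    (∀ r ∈ Ioo (0:ℝ) 1, Op u r + μ * u r * r ^ (-γ) ≤ 0)}

lemma mul_le_max_sub_max {lam Lam c : ℝ} (hlc : lam ≤ c) (hcL : c ≤ Lam) (s : ℝ) :
    c * s ≤ Lam * max s 0 - lam * max (-s) 0 := by
  rcases le_total 0 s with h | h
  · rw [max_eq_left h, max_eq_right (neg_nonpos.2 h)]; nlinarith
  · rw [max_eq_right h, max_eq_left (neg_nonneg.2 h)]; nlinarith

lemma max_sub_max_of_nonneg (lam Lam : ℝ) {s : ℝ} (hs : 0 ≤ s) :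
    Lam * max s 0 - lam * max (-s) 0 = Lam * s := by
  rw [max_eq_left hs, max_eq_right (neg_nonpos.2 hs)]; ring

lemma max_sub_max_of_nonpos (lam Lam : ℝ) {s : ℝ} (hs : s ≤ 0) :
    Lam * max s 0 - lam * max (-s) 0 = lam * s := by
  rw [max_eq_right hs, max_eq_left (neg_nonneg.2 hs)]; ring

lemma linear_le_pucciP {lam Lam : ℝ} {N : ℕ} (hN : 1 ≤ N) (hlL : lam ≤ Lam) (u : ℝ → ℝ)
    (r : ℝ) :
    Lam * deriv (deriv u) r + lam * ((N : ℝ) - 1) * (deriv u r / r) ≤ pucciP lam Lam N u r := by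
  have hN' : (0 : ℝ) ≤ (N : ℝ) - 1 := by
    rw [sub_nonneg]; exact_mod_cast hN
  have h₂ := mul_le_max_sub_max hlL le_rfl (deriv (deriv u) r)
  have h₁ := mul_le_mul_of_nonneg_left (mul_le_max_sub_max le_rfl hlL (deriv u r / r)) hN'
  unfold pucciP
  linarith

lemma pucciP_eq_of_convex_of_decreasing (lam Lam : ℝ) (N : ℕ) {u : ℝ → ℝ} {r : ℝ} (hr : 0 < r)
    (h₂ : 0 ≤ deriv (deriv u) r) (h₁ : deriv u r ≤ 0) :
    pucciP lam Lam N u r = Lam * deriv (deriv u) r + lam * ((N : ℝ) - 1) * (deriv u r / r) := by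
  unfold pucciP
  rw [max_sub_max_of_nonneg lam Lam h₂,
    max_sub_max_of_nonpos lam Lam (div_nonpos_of_nonpos_of_nonneg h₁ hr.le)]
  ring

lemma add_nonpos_of_oscillator_supersolution {v v' v'' : ℝ → ℝ} {β a b : ℝ} (hβ : 0 < β)
    (hab : β * (b - a) = π)
    (hv : ∀ t ∈ Icc a b, HasDerivAt v (v' t) t) (hv' : ∀ t ∈ Icc a b, HasDerivAt v' (v'' t) t)
    (hsuper : ∀ t ∈ Icc a b, v'' t + β ^ 2 * v t ≤ 0) :
    v a + v b ≤ 0 := by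
  have hab' : a ≤ b := by
    have : 0 < b - a := pos_of_mul_pos_right (hab ▸ pi_pos) hβ.le
    linarith
  set θ : ℝ → ℝ := fun t => β * (t - a)
  have hθ : ∀ t, HasDerivAt θ β t := fun t => by
    simpa using ((hasDerivAt_id t).sub_const a).const_mul β
  -- Wronskian of `v` with the comparison solution `sin θ`.
  set W : ℝ → ℝ := fun t => β * v t * cos (θ t) - v' t * sin (θ t)
  have hW : ∀ t ∈ Icc a b, HasDerivAt W (-(sin (θ t) * (v'' t + β ^ 2 * v t))) t := by
    intro t ht
    exact (((hv t ht).const_mul β).mul (hθ t).cos).sub ((hv' t ht).mul (hθ t).sin)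
      |>.congr_deriv (by ring)
  have hmono : MonotoneOn W (Icc a b) := by
    refine monotoneOn_of_hasDerivWithinAt_nonneg (convex_Icc a b)
      (fun t ht => (hW t ht).continuousAt.continuousWithinAt)
      (fun t ht => (hW t (interior_subset ht)).hasDerivWithinAt) fun t ht => ?_
    rw [interior_Icc] at ht
    have hsin : 0 ≤ sin (θ t) :=
      sin_nonneg_of_nonneg_of_le_pi (by nlinarith [ht.1]) (by nlinarith [ht.2])
    nlinarith [hsuper t (Ioo_subset_Icc_self ht)]
  have := hmono (left_mem_Icc.2 hab') (right_mem_Icc.2 hab') hab'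
  simp only [W, θ, sub_self, mul_zero, cos_zero, sin_zero, hab, cos_pi, sin_pi] at this
  nlinarith

lemma hasDerivAt_exp_mul_mul_comp_exp {u : ℝ → ℝ} {d : ℝ} (α t : ℝ)
    (hu : HasDerivAt u d (exp t)) :
    HasDerivAt (fun t => exp (α * t) * u (exp t))
      (exp (α * t) * (α * u (exp t) + exp t * d)) t := by
  have hexp : HasDerivAt (fun t => exp (α * t)) (exp (α * t) * α) t := by
    simpa using ((hasDerivAt_id t).const_mul α).exp
  exact (hexp.mul (hu.comp t (hasDerivAt_exp t))).congr_deriv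
    (by simp only [Function.comp_apply]; ring)

lemma ContDiffOn.hasDerivAt_deriv_and_deriv_deriv {u : ℝ → ℝ} {s : Set ℝ} (hs : IsOpen s)
    (hu : ContDiffOn ℝ 2 u s) {r : ℝ} (hr : r ∈ s) :
    HasDerivAt u (deriv u r) r ∧ HasDerivAt (deriv u) (deriv (deriv u) r) r := by
  have hu' : ContDiffOn ℝ 1 (deriv u) s := hu.deriv_of_isOpen hs (by norm_num)
  exact ⟨((hu.differentiableOn (by norm_num)) r hr).differentiableAt (hs.mem_nhds hr)
      |>.hasDerivAt,
    ((hu'.differentiableOn one_ne_zero) r hr).differentiableAt (hs.mem_nhds hr) |>.hasDerivAt⟩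

lemma le_sq_of_euler_supersolution {u : ℝ → ℝ} {b κ : ℝ} (hu : ContDiffOn ℝ 2 u (Ioo 0 1))
    (hpos : ∀ r ∈ Ioo (0 : ℝ) 1, 0 < u r)
    (hsuper : ∀ r ∈ Ioo (0 : ℝ) 1,
      r ^ 2 * deriv (deriv u) r + b * r * deriv u r + κ * u r ≤ 0) :
    κ ≤ ((b - 1) / 2) ^ 2 := by
  set α := (b - 1) / 2
  by_contra! hκ
  set β := √(κ - α ^ 2)
  have hβ : 0 < β := sqrt_pos.2 (sub_pos.2 hκ)
  have hβ2 : β ^ 2 = κ - α ^ 2 := sq_sqrt (sub_pos.2 hκ).le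
  have hmem : ∀ t ∈ Icc (-1 - π / β) (-1), exp t ∈ Ioo (0 : ℝ) 1 := fun t ht =>
    ⟨exp_pos t, exp_lt_one_iff.2 (by linarith [ht.2])⟩
  have hder := fun t ht => hu.hasDerivAt_deriv_and_deriv_deriv isOpen_Ioo (hmem t ht)
  -- `v(t) = e^{αt} u(e^t)` has `v' = e^{αt} w(e^t)`, and at `r = e^t`
  -- `v'' + β² v = e^{αt} (r² u'' + b r u' + κ u)`.
  set w : ℝ → ℝ := fun r => α * u r + r * deriv u r
  have hw : ∀ t ∈ Icc (-1 - π / β) (-1), HasDerivAt w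
      (α * deriv u (exp t) + (deriv u (exp t) + exp t * deriv (deriv u) (exp t))) (exp t) :=
    fun t ht => ((hder t ht).1.const_mul α).add ((hasDerivAt_id _).mul (hder t ht).2)
      |>.congr_deriv (by simp)
  have key := add_nonpos_of_oscillator_supersolution (v := fun t => exp (α * t) * u (exp t))
    hβ (by field_simp; ring)
    (fun t ht => hasDerivAt_exp_mul_mul_comp_exp α t (hder t ht).1)
    (fun t ht => hasDerivAt_exp_mul_mul_comp_exp α t (hw t ht))
    (fun t ht => by
      have := mul_nonpos_of_nonneg_of_nonpos (exp_pos (α * t)).le (hsuper _ (hmem t ht))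
      rw [hβ2]
      linear_combination this)
  have hva := hpos _ (hmem _ (left_mem_Icc.2 (by linarith [div_pos pi_pos hβ])))
  have hvb := hpos _ (hmem _ (right_mem_Icc.2 (by linarith [div_pos pi_pos hβ])))
  nlinarith [exp_pos (α * (-1 - π / β)), exp_pos (α * -1)]

lemma hasDerivAt_rpow_neg_mul_neg_log (α : ℝ) {r : ℝ} (hr : 0 < r) :
    HasDerivAt (fun r => r ^ (-α) * -log r) (r ^ (-α) * (α * log r - 1) / r) r := by
  have hpow := hasDerivAt_rpow_const (p := -α) (Or.inl hr.ne')
  rw [rpow_sub_one hr.ne'] at hpow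
  exact (hpow.mul (hasDerivAt_log hr.ne').neg).congr_deriv
    (by simp only [Pi.neg_apply]; field_simp; ring)

lemma hasDerivAt_rpow_neg_mul_log_sub_one_div (α : ℝ) {r : ℝ} (hr : 0 < r) :
    HasDerivAt (fun r => r ^ (-α) * (α * log r - 1) / r)
      (r ^ (-α) * (2 * α + 1 - α * (α + 1) * log r) / r ^ 2) r := by
  have hpow := hasDerivAt_rpow_const (p := -α) (Or.inl hr.ne')
  rw [rpow_sub_one hr.ne'] at hpow
  have hlog := ((hasDerivAt_log hr.ne').const_mul α).sub_const 1
  exact ((hpow.mul hlog).div (hasDerivAt_id r) hr.ne').congr_deriv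
    (by simp only [Pi.mul_apply, id]; field_simp; ring)

lemma deriv_rpow_neg_mul_neg_log_eventuallyEq (α : ℝ) {r : ℝ} (hr : 0 < r) :
    deriv (fun r => r ^ (-α) * -log r) =ᶠ[nhds r] fun r => r ^ (-α) * (α * log r - 1) / r := by
  filter_upwards [Ioi_mem_nhds hr] with x hx
  exact (hasDerivAt_rpow_neg_mul_neg_log α hx).deriv

lemma deriv_deriv_rpow_neg_mul_neg_log (α : ℝ) {r : ℝ} (hr : 0 < r) :
    deriv (deriv fun r => r ^ (-α) * -log r) r =
      r ^ (-α) * (2 * α + 1 - α * (α + 1) * log r) / r ^ 2 :=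
  (deriv_rpow_neg_mul_neg_log_eventuallyEq α hr).deriv_eq.trans
    (hasDerivAt_rpow_neg_mul_log_sub_one_div α hr).deriv

lemma pucciP_rpow_neg_mul_neg_log {lam Lam α : ℝ} {N : ℕ} (hα : 0 ≤ α)
    (hcoef : lam * ((N : ℝ) - 1) = Lam * (2 * α + 1)) {r : ℝ} (hr : r ∈ Ioo (0 : ℝ) 1) :
    pucciP lam Lam N (fun r => r ^ (-α) * -log r) r
      + Lam * α ^ 2 * (r ^ (-α) * -log r) * r ^ (-(2 : ℝ)) = 0 := by
  have hlog : log r < 0 := log_neg hr.1 hr.2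
  have hrα : 0 < r ^ (-α) := rpow_pos_of_pos hr.1 _
  have h₁ := (hasDerivAt_rpow_neg_mul_neg_log α hr.1).deriv
  have h₂ := deriv_deriv_rpow_neg_mul_neg_log α hr.1
  have hconvex : 0 ≤ deriv (deriv fun r => r ^ (-α) * -log r) r := by
    have : 0 ≤ α * (α + 1) * -log r := by
      have : 0 ≤ α + 1 := by linarith
      have : 0 ≤ -log r := by linarith
      positivity
    rw [h₂]
    exact div_nonneg (mul_nonneg hrα.le (by linarith)) (sq_nonneg r)
  have hdecreasing : deriv (fun r => r ^ (-α) * -log r) r ≤ 0 := by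
    have : 0 ≤ α * -log r := mul_nonneg hα (by linarith)
    rw [h₁]
    exact div_nonpos_of_nonpos_of_nonneg (mul_nonpos_of_nonneg_of_nonpos hrα.le (by linarith))
      hr.1.le
  rw [pucciP_eq_of_convex_of_decreasing lam Lam N hr.1 hconvex hdecreasing, h₁, h₂,
    rpow_neg hr.1.le (2 : ℝ), rpow_two, hcoef]
  field_simp
  ring

lemma contDiffOn_rpow_neg_mul_neg_log (α : ℝ) :
    ContDiffOn ℝ 2 (fun r => r ^ (-α) * -log r) (Ioi 0) := fun _ hr =>
  ((contDiffAt_rpow_const_of_ne (ne_of_gt hr)).mul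
    (contDiffAt_log.2 (ne_of_gt hr)).neg).contDiffWithinAt

lemma euler_supersolution_of_pucciP_supersolution {lam Lam μ : ℝ} {N : ℕ} (hN : 1 ≤ N)
    (hlL : lam ≤ Lam) (hLam : 0 < Lam) {u : ℝ → ℝ} {r : ℝ} (hr : 0 < r)
    (h : pucciP lam Lam N u r + μ * u r * r ^ (-(2 : ℝ)) ≤ 0) :
    r ^ 2 * deriv (deriv u) r + lam / Lam * ((N : ℝ) - 1) * r * deriv u r + μ / Lam * u r
      ≤ 0 := by
  have hlin := linear_le_pucciP hN hlL u r
  calc r ^ 2 * deriv (deriv u) r + lam / Lam * ((N : ℝ) - 1) * r * deriv u r + μ / Lam * u r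
      = r ^ 2 / Lam * (Lam * deriv (deriv u) r + lam * ((N : ℝ) - 1) * (deriv u r / r)
          + μ * u r * r ^ (-(2 : ℝ))) := by
        rw [rpow_neg hr.le, rpow_two]; field_simp
    _ ≤ 0 := mul_nonpos_of_nonneg_of_nonpos (by positivity) (by linarith)

theorem stmt2 (N : ℕ) (hN : 2 ≤ N) (lam Lam : ℝ) (hlam : 0 < lam) (hlL : lam ≤ Lam)
    (Np : ℝ) (hNpdef : Np = lam / Lam * ((N : ℝ) - 1) + 1) (hNp : 2 < Np) :
    radialEVop (pucciP lam Lam N) 2 = Lam * (Np - 2) ^ 2 / 4 ∧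
    (∀ r ∈ Ioo (0:ℝ) 1, 0 < r ^ (-((Np - 2) / 2)) * (-Real.log r)) ∧
    ((1:ℝ) ^ (-((Np - 2) / 2)) * (-Real.log 1) = 0) ∧
    (∀ r ∈ Ioo (0:ℝ) 1,
      pucciP lam Lam N (fun r => r ^ (-((Np - 2) / 2)) * (-Real.log r)) r
        + Lam * ((Np - 2) / 2) ^ 2
          * (r ^ (-((Np - 2) / 2)) * (-Real.log r)) * r ^ (-(2:ℝ)) = 0) := by
  have hLam : 0 < Lam := hlam.trans_le hlL
  have hcoef : lam * ((N : ℝ) - 1) = Lam * (2 * ((Np - 2) / 2) + 1) := by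
    rw [hNpdef]; field_simp; ring
  have hsol := fun r (hr : r ∈ Ioo (0 : ℝ) 1) =>
    pucciP_rpow_neg_mul_neg_log (by linarith : 0 ≤ (Np - 2) / 2) hcoef hr
  have hpos : ∀ r ∈ Ioo (0 : ℝ) 1, 0 < r ^ (-((Np - 2) / 2)) * -log r := fun r hr =>
    mul_pos (rpow_pos_of_pos hr.1 _) (neg_pos.2 (log_neg hr.1 hr.2))
  refine ⟨IsGreatest.csSup_eq ⟨?_, ?_⟩, hpos, by simp, hsol⟩
  · exact ⟨_, (contDiffOn_rpow_neg_mul_neg_log _).mono Ioo_subset_Ioi_self, hpos,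
      fun r hr => by linarith [hsol r hr]⟩
  · rintro μ ⟨u, hu, hupos, hsuper⟩
    have hμ := le_sq_of_euler_supersolution hu hupos fun r hr =>
      euler_supersolution_of_pucciP_supersolution (by omega) hlL hLam hr.1 (hsuper r hr)
    rw [← sub_eq_of_eq_add hNpdef, div_le_iff₀ hLam] at hμ
    linarith

end
end

section
/- Let 0 < γ < 2, let f : (0,1) → ℝ be continuous, bounded and everywhere positive, and let u : (0,1) → ℝ be a bounded C² function satisfying 𝓜⁺[u](r) ≥ f(r)·r^{−γ} for all r ∈ (0,1). Then there exists r₀ ∈ (0,1) such that u'(r) ≥ 0 for all r ∈ (0,r₀); moreover lim_{r→0⁺} u'(r)·r^{Ñ₋−1} = 0 and u'(r) ≥ (inf_{(0,1)} f)/(Λ·(Ñ₋−γ))·r^{1−γ} for all r ∈ (0,r₀). -/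
/-!
Write `A = u''`, `B = u'/r`, `β = Ñ₊ - 1` and `α = Ñ₋ - 1`. As `𝓜⁺[u] > 0`, we get `u'' > 0` at
a zero of `u'`, `A + β B > 0` where `u' < 0`, and `𝓜⁺[u] ≤ Λ (A + α B)` where `u' ≥ 0`.
If `u'(r₁) < 0`, the first fact keeps `u' < 0` on `(0, r₁]`, the second makes `u' r^β`
nondecreasing there, so `u' ≤ -c r^(-β)` and `u` is unbounded because `β > 1`. Hence `u' ≥ 0`,
and by the third fact `u' r^α - c₀ r^(Ñ₋ - γ)`, with `c₀ = inf f / (Λ (Ñ₋ - γ))`, is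
nondecreasing. Its limit `L ≥ 0` at `0⁺` must vanish, for otherwise `u' ≥ L r^(-α)` would make
`u` unbounded once more; so this function is nonnegative, which is the lower bound on `u'`.
-/

open Set Real Filter MeasureTheory

noncomputable section

open Topology

section Pointwise

variable {lam Lam : ℝ} {N : ℕ} {u : ℝ → ℝ} {r : ℝ}

theorem deriv_deriv_pos_of_deriv_eq_zero (hlam : 0 ≤ lam) (hzero : deriv u r = 0)
    (hP : 0 < pucciP lam Lam N u r) : 0 < deriv (deriv u) r := by
  by_contra! hA
  rw [pucciP, hzero, zero_div, max_eq_right hA, max_eq_left (neg_nonneg.2 hA)] at hP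
  norm_num at hP
  nlinarith

theorem deriv_deriv_add_pos_of_deriv_neg (hlam : 0 ≤ lam) (hLam : 0 < Lam) (hN : 1 ≤ N)
    (hr : 0 < r) (hneg : deriv u r < 0) (hP : 0 < pucciP lam Lam N u r) :
    0 < deriv (deriv u) r + lam / Lam * (N - 1) * (deriv u r / r) := by
  have hN' : (0 : ℝ) ≤ N - 1 := by rw [sub_nonneg]; exact_mod_cast hN
  set A := deriv (deriv u) r
  set B := deriv u r / r
  have hB : B < 0 := div_neg_of_neg_of_pos hneg hr
  rw [pucciP, max_eq_right hB.le, max_eq_left (neg_nonneg.2 hB.le)] at hP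
  rcases le_or_gt A 0 with hA | hA
  · rw [max_eq_right hA, max_eq_left (neg_nonneg.2 hA)] at hP
    nlinarith [mul_nonneg hlam hN', mul_nonneg hlam (neg_nonneg.2 hA)]
  · rw [max_eq_left hA.le, max_eq_right (neg_nonpos.2 hA.le)] at hP
    have : Lam * (A + lam / Lam * (N - 1) * B) = Lam * A + (N - 1) * lam * B := by
      field_simp
    nlinarith

theorem pucciP_le_of_deriv_nonneg (hlam : 0 < lam) (hlL : lam ≤ Lam) (hN : 1 ≤ N)
    (hr : 0 < r) (hnn : 0 ≤ deriv u r) (hP : 0 < pucciP lam Lam N u r) :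
    pucciP lam Lam N u r ≤ Lam * (deriv (deriv u) r + Lam / lam * (N - 1) * (deriv u r / r)) := by
  have hN' : (0 : ℝ) ≤ N - 1 := by rw [sub_nonneg]; exact_mod_cast hN
  set A := deriv (deriv u) r
  set B := deriv u r / r
  have hB : 0 ≤ B := div_nonneg hnn hr.le
  rw [pucciP, max_eq_left hB, max_eq_right (neg_nonpos.2 hB)] at hP ⊢
  rcases le_or_gt 0 A with hA | hA
  · rw [max_eq_left hA, max_eq_right (neg_nonpos.2 hA)] at hP ⊢
    have : Lam ≤ Lam / lam * Lam := by
      rw [div_mul_eq_mul_div, le_div_iff₀ hlam]; nlinarith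
    nlinarith [mul_nonneg hN' hB]
  · rw [max_eq_right hA.le, max_eq_left (neg_nonneg.2 hA.le)] at hP ⊢
    -- here `𝓜⁺[u] = λ (A + α B)` with `α = (Λ / λ) (N - 1)`
    have heq : Lam * (A + Lam / lam * (N - 1) * B)
        = Lam / lam * (Lam * 0 - lam * -A + (N - 1) * (Lam * B - lam * 0)) := by
      field_simp; ring
    rw [heq]
    have : 1 ≤ Lam / lam := (one_le_div hlam).2 hlL
    nlinarith

end Pointwise

theorem HasDerivAt.mul_rpow_const_of_pos {g : ℝ → ℝ} {g' x : ℝ} (a : ℝ) (hg : HasDerivAt g g' x)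
    (hx : 0 < x) : HasDerivAt (fun y => g y * y ^ a) (x ^ a * (g' + a * (g x / x))) x := by
  refine (hg.mul (hasDerivAt_rpow_const (Or.inl hx.ne'))).congr_deriv ?_
  rw [rpow_sub hx, rpow_one]
  field_simp

theorem monotoneOn_of_forall_hasDerivAt_nonneg {D : Set ℝ} (hD : Convex ℝ D) {f f' : ℝ → ℝ}
    (hf : ∀ x ∈ D, HasDerivAt f (f' x) x) (hf' : ∀ x ∈ interior D, 0 ≤ f' x) :
    MonotoneOn f D :=
  monotoneOn_of_hasDerivWithinAt_nonneg hD
    (fun x hx => (hf x hx).continuousAt.continuousWithinAt)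
    (fun x hx => (hf x (interior_subset hx)).hasDerivWithinAt) hf'

theorem nonneg_of_deriv_pos_of_eq_zero {g g' : ℝ → ℝ} {a b : ℝ}
    (hg : ∀ x ∈ Icc a b, HasDerivAt g (g' x) x) (ha : 0 ≤ g a)
    (hzero : ∀ x ∈ Ico a b, g x = 0 → 0 < g' x) : ∀ x ∈ Icc a b, 0 ≤ g x := by
  intro x hx
  have := image_le_of_deriv_right_lt_deriv_boundary (f := fun y => -g y) (f' := fun y => -g' y)
    (B := fun _ => 0) (B' := fun _ => 0)
    (fun y hy => (hg y hy).continuousAt.continuousWithinAt.neg)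
    (fun y hy => (hg y (Ico_subset_Icc_self hy)).neg.hasDerivWithinAt) (by simpa using ha)
    (fun _ => hasDerivAt_const _ _)
    (fun y hy hy0 => by simpa using hzero y hy (by simpa using hy0)) hx
  simpa using this

theorem tendsto_atTop_of_deriv_le_neg_rpow {v v' : ℝ → ℝ} {b c β : ℝ} (hb : 0 < b) (hc : 0 < c)
    (hβ : 1 < β) (hv : ∀ x ∈ Ioo 0 b, HasDerivAt v (v' x) x)
    (hv' : ∀ x ∈ Ioo 0 b, v' x ≤ -c * x ^ (-β)) : Tendsto v (𝓝[>] 0) atTop := by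
  set K := c / (β - 1)
  have hK : 0 < K := div_pos hc (by linarith)
  -- `K` is chosen so that `K x ^ (1 - β)` has derivative `-c x ^ (-β)`
  have hmono : MonotoneOn (fun x => K * x ^ (1 - β) - v x) (Ioo 0 b) := by
    refine monotoneOn_of_forall_hasDerivAt_nonneg (convex_Ioo 0 b)
      (fun x hx => ((hasDerivAt_rpow_const (p := 1 - β) (Or.inl hx.1.ne')).const_mul K).sub
        (hv x hx)) fun x hx => ?_
    rw [interior_Ioo] at hx
    have : K * ((1 - β) * x ^ (1 - β - 1)) = -c * x ^ (-β) := by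
      rw [show 1 - β - 1 = -β by ring, div_mul_eq_mul_div, div_eq_iff (by linarith)]; ring
    linarith [hv' x hx]
  have hs : b / 2 ∈ Ioo 0 b := ⟨by positivity, by linarith⟩
  have hlow : ∀ x ∈ Ioc 0 (b / 2), v (b / 2) - K * (b / 2) ^ (1 - β) + K * x ^ (1 - β) ≤ v x :=
    fun x hx => by linarith [hmono ⟨hx.1, hx.2.trans_lt hs.2⟩ hs hx.2]
  refine tendsto_atTop_mono' _ ?_
    (tendsto_atTop_add_const_left _ (v (b / 2) - K * (b / 2) ^ (1 - β))
      ((tendsto_rpow_neg_nhdsGT_zero (by linarith : 1 - β < 0)).const_mul_atTop hK))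
  filter_upwards [Ioc_mem_nhdsGT hs.1] with x hx using hlow x hx

theorem not_bddAbove_image_Ioo_of_tendsto_atTop {v : ℝ → ℝ} {a b : ℝ} (hab : a < b)
    (hv : Tendsto v (𝓝[>] a) atTop) : ¬BddAbove (v '' Ioo a b) := by
  rintro ⟨C, hC⟩
  obtain ⟨x, hxC, hx⟩ := ((hv.eventually_gt_atTop C).and (Ioo_mem_nhdsGT hab)).exists
  exact hxC.not_ge (hC (mem_image_of_mem v hx))

theorem ContDiffOn.hasDerivAt_deriv {u : ℝ → ℝ} {s : Set ℝ} {x : ℝ} {n : WithTop ℕ∞}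
    (hu : ContDiffOn ℝ n u s) (hn : 2 ≤ n) (hs : IsOpen s) (hx : x ∈ s) :
    HasDerivAt (deriv u) (deriv (deriv u) x) x :=
  ((hu.deriv_of_isOpen (m := 1) hs hn).differentiableOn one_ne_zero x hx
    |>.differentiableAt (hs.mem_nhds hx)).hasDerivAt

theorem ContDiffOn.hasDerivAt {u : ℝ → ℝ} {s : Set ℝ} {x : ℝ} {n : WithTop ℕ∞}
    (hu : ContDiffOn ℝ n u s) (hn : n ≠ 0) (hs : IsOpen s) (hx : x ∈ s) :
    HasDerivAt u (deriv u x) x :=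
  (hu.differentiableOn hn x hx |>.differentiableAt (hs.mem_nhds hx)).hasDerivAt

theorem MonotoneOn.le_of_tendsto_nhdsGT {f : ℝ → ℝ} {a b l x : ℝ} (hf : MonotoneOn f (Ioo a b))
    (hl : Tendsto f (𝓝[>] a) (𝓝 l)) (hx : x ∈ Ioo a b) : l ≤ f x :=
  le_of_tendsto hl <| by
    filter_upwards [Ioo_mem_nhdsGT hx.1] with y hy using hf ⟨hy.1, hy.2.trans hx.2⟩ hx hy.2.le

section Radial

variable {lam Lam : ℝ} {N : ℕ} {u : ℝ → ℝ} {m γ Nm : ℝ}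

theorem deriv_nonneg_of_pucciP_pos (hlam : 0 < lam) (hLam : 0 < Lam) (hN : 1 ≤ N)
    (hβ : 1 < lam / Lam * (N - 1)) (hu : ContDiffOn ℝ 2 u (Ioo 0 1))
    (hub : BddAbove (u '' Ioo 0 1)) (hP : ∀ r ∈ Ioo (0 : ℝ) 1, 0 < pucciP lam Lam N u r) :
    ∀ r ∈ Ioo (0 : ℝ) 1, 0 ≤ deriv u r := by
  set β := lam / Lam * (N - 1)
  by_contra! hcon
  obtain ⟨r₁, hr₁, hneg⟩ := hcon
  have hsub : Ioc 0 r₁ ⊆ Ioo 0 1 := fun x hx => ⟨hx.1, hx.2.trans_lt hr₁.2⟩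
  have hu' : ∀ x ∈ Ioc 0 r₁, HasDerivAt (deriv u) (deriv (deriv u) x) x :=
    fun x hx => hu.hasDerivAt_deriv le_rfl isOpen_Ioo (hsub hx)
  -- `u'` cannot come back to `0` below `r₁`, since `u'' > 0` at every zero of `u'`
  have hneg_on : ∀ x ∈ Ioc 0 r₁, deriv u x < 0 := by
    intro s hs
    by_contra! hs0
    have hsr : Icc s r₁ ⊆ Ioc 0 r₁ := fun x hx => ⟨hs.1.trans_le hx.1, hx.2⟩
    have := nonneg_of_deriv_pos_of_eq_zero (fun x hx => hu' x (hsr hx)) hs0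
      (fun x hx hx0 => deriv_deriv_pos_of_deriv_eq_zero hlam.le hx0
        (hP x (hsub (hsr (Ico_subset_Icc_self hx))))) r₁ ⟨hs.2, le_rfl⟩
    linarith
  have hmono : MonotoneOn (fun x => deriv u x * x ^ β) (Ioc 0 r₁) := by
    refine monotoneOn_of_forall_hasDerivAt_nonneg (convex_Ioc 0 r₁)
      (fun x hx => (hu' x hx).mul_rpow_const_of_pos β hx.1) fun x hx => ?_
    rw [interior_Ioc] at hx
    exact mul_nonneg (rpow_nonneg hx.1.le _) (deriv_deriv_add_pos_of_deriv_neg hlam.le hLam hN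
      hx.1 (hneg_on x (Ioo_subset_Ioc_self hx)) (hP x (hsub (Ioo_subset_Ioc_self hx)))).le
  set c := -(deriv u r₁ * r₁ ^ β)
  have hc : 0 < c := neg_pos.2 (mul_neg_of_neg_of_pos hneg (rpow_pos_of_pos hr₁.1 β))
  have hbound : ∀ x ∈ Ioo 0 r₁, deriv u x ≤ -c * x ^ (-β) := by
    intro x hx
    have := hmono ⟨hx.1, hx.2.le⟩ ⟨hr₁.1, le_rfl⟩ hx.2.le
    rw [rpow_neg hx.1.le, ← div_eq_mul_inv, le_div_iff₀ (rpow_pos_of_pos hx.1 β)]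
    simpa [c] using this
  refine not_bddAbove_image_Ioo_of_tendsto_atTop hr₁.1
    (tendsto_atTop_of_deriv_le_neg_rpow hr₁.1 hc hβ
      (fun x hx => hu.hasDerivAt two_ne_zero isOpen_Ioo ⟨hx.1, hx.2.trans hr₁.2⟩) hbound)
    (hub.mono (image_mono (Ioo_subset_Ioo_right hr₁.2.le)))

theorem monotoneOn_deriv_mul_rpow_sub_rpow (hlam : 0 < lam) (hlL : lam ≤ Lam) (hN : 1 ≤ N)
    (hNm : Nm = Lam / lam * (N - 1) + 1) (hγ : γ < Nm) (hu : ContDiffOn ℝ 2 u (Ioo 0 1))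
    (hnn : ∀ r ∈ Ioo (0 : ℝ) 1, 0 ≤ deriv u r) (hP : ∀ r ∈ Ioo (0 : ℝ) 1, 0 < pucciP lam Lam N u r)
    (hmP : ∀ r ∈ Ioo (0 : ℝ) 1, m * r ^ (-γ) ≤ pucciP lam Lam N u r) :
    MonotoneOn (fun r => deriv u r * r ^ (Nm - 1) - m / (Lam * (Nm - γ)) * r ^ (Nm - γ))
      (Ioo 0 1) := by
  have hLam : 0 < Lam := hlam.trans_le hlL
  refine monotoneOn_of_forall_hasDerivAt_nonneg (convex_Ioo 0 1) (fun x hx =>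
    ((hu.hasDerivAt_deriv le_rfl isOpen_Ioo hx).mul_rpow_const_of_pos (Nm - 1) hx.1).sub
      ((hasDerivAt_rpow_const (p := Nm - γ) (Or.inl hx.1.ne')).const_mul _)) fun x hx => ?_
  rw [interior_Ioo] at hx
  have hpow : x ^ (Nm - γ - 1) = x ^ (Nm - 1) * x ^ (-γ) := by
    rw [← rpow_add hx.1]; ring_nf
  have hcoef : m / (Lam * (Nm - γ)) * ((Nm - γ) * x ^ (Nm - γ - 1))
      = x ^ (Nm - 1) * (m * x ^ (-γ) / Lam) := by
    rw [hpow]; field_simp [(sub_pos.2 hγ).ne']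
  have hle : m * x ^ (-γ) / Lam ≤ deriv (deriv u) x + (Nm - 1) * (deriv u x / x) := by
    rw [div_le_iff₀' hLam, hNm, add_sub_cancel_right]
    exact (hmP x hx).trans (pucciP_le_of_deriv_nonneg hlam hlL hN hx.1 (hnn x hx) (hP x hx))
  rw [hcoef, sub_nonneg]
  exact mul_le_mul_of_nonneg_left hle (rpow_nonneg hx.1.le _)

theorem tendsto_deriv_mul_rpow_and_le_deriv (hlam : 0 < lam) (hlL : lam ≤ Lam) (hN : 1 ≤ N)
    (hNm : Nm = Lam / lam * (N - 1) + 1) (hNm2 : 2 < Nm) (hγ : γ < Nm) (hm : 0 ≤ m)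
    (hu : ContDiffOn ℝ 2 u (Ioo 0 1)) (hub : BddBelow (u '' Ioo 0 1))
    (hnn : ∀ r ∈ Ioo (0 : ℝ) 1, 0 ≤ deriv u r) (hP : ∀ r ∈ Ioo (0 : ℝ) 1, 0 < pucciP lam Lam N u r)
    (hmP : ∀ r ∈ Ioo (0 : ℝ) 1, m * r ^ (-γ) ≤ pucciP lam Lam N u r) :
    Tendsto (fun r => deriv u r * r ^ (Nm - 1)) (𝓝[>] 0) (𝓝 0) ∧
      ∀ r ∈ Ioo (0 : ℝ) 1, m / (Lam * (Nm - γ)) * r ^ (1 - γ) ≤ deriv u r := by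
  have hp : 0 < Nm - γ := sub_pos.2 hγ
  set c₀ := m / (Lam * (Nm - γ))
  have hc₀ : 0 ≤ c₀ := div_nonneg hm (mul_nonneg (hlam.trans_le hlL).le hp.le)
  set h := fun r => deriv u r * r ^ (Nm - 1)
  set g := fun r => h r - c₀ * r ^ (Nm - γ)
  have hh : ∀ r ∈ Ioo (0 : ℝ) 1, 0 ≤ h r :=
    fun r hr => mul_nonneg (hnn r hr) (rpow_nonneg hr.1.le _)
  have hgh : ∀ r ∈ Ioo (0 : ℝ) 1, g r ≤ h r :=
    fun r hr => sub_le_self _ (mul_nonneg hc₀ (rpow_nonneg hr.1.le _))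
  have hmono : MonotoneOn g (Ioo 0 1) :=
    monotoneOn_deriv_mul_rpow_sub_rpow hlam hlL hN hNm hγ hu hnn hP hmP
  have hbdd : BddBelow (g '' Ioo 0 1) := by
    refine ⟨-c₀, ?_⟩
    rintro _ ⟨r, hr, rfl⟩
    have := rpow_le_one hr.1.le hr.2.le hp.le
    nlinarith [hh r hr]
  set L := sInf (g '' Ioo 0 1)
  have hgL : Tendsto g (𝓝[>] 0) (𝓝 L) :=
    hmono.tendsto_nhdsWithin_Ioo_right (nonempty_Ioo.2 one_pos) hbdd
  have hpow : Tendsto (fun r : ℝ => c₀ * r ^ (Nm - γ)) (𝓝[>] 0) (𝓝 0) := by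
    have := (continuousAt_rpow_const 0 (Nm - γ) (Or.inr hp.le)).tendsto.const_mul c₀
    simpa [zero_rpow hp.ne'] using this.mono_left nhdsWithin_le_nhds
  have hhL : Tendsto h (𝓝[>] 0) (𝓝 L) := by
    simpa [g] using hgL.add hpow
  -- a positive limit would force `u' ≥ L r^(1 - Nm)`, which makes `u` unbounded below
  have hL : L = 0 := by
    refine le_antisymm (not_lt.1 fun hLpos => ?_) <|
      ge_of_tendsto hhL (by filter_upwards [Ioo_mem_nhdsGT one_pos] using hh)
    have hbound : ∀ x ∈ Ioo (0 : ℝ) 1, -deriv u x ≤ -L * x ^ (-(Nm - 1)) := by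
      intro x hx
      have : L / x ^ (Nm - 1) ≤ deriv u x := (div_le_iff₀ (rpow_pos_of_pos hx.1 _)).2
        ((hmono.le_of_tendsto_nhdsGT hgL hx).trans (hgh x hx))
      rw [rpow_neg hx.1.le, neg_mul, ← div_eq_mul_inv]
      linarith
    obtain ⟨C, hC⟩ := hub
    refine not_bddAbove_image_Ioo_of_tendsto_atTop one_pos
      (tendsto_atTop_of_deriv_le_neg_rpow one_pos hLpos (by linarith)
        (fun x hx => (hu.hasDerivAt two_ne_zero isOpen_Ioo hx).neg) hbound) ⟨-C, ?_⟩
    rintro _ ⟨x, hx, rfl⟩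
    exact neg_le_neg (hC (mem_image_of_mem u hx))
  rw [hL] at hgL hhL
  refine ⟨hhL, fun r hr => ?_⟩
  have hg0 : 0 ≤ g r := hmono.le_of_tendsto_nhdsGT hgL hr
  have hsplit : r ^ (Nm - γ) = r ^ (1 - γ) * r ^ (Nm - 1) := by
    rw [← rpow_add hr.1]; ring_nf
  rw [← mul_le_mul_iff_of_pos_right (rpow_pos_of_pos hr.1 (Nm - 1))]
  simp only [g, h, hsplit] at hg0
  linarith

end Radial

theorem stmt7_general (N : ℕ) (lam Lam : ℝ) (hlam : 0 < lam) (hlL : lam ≤ Lam)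
    (hNp : 2 < lam / Lam * ((N : ℝ) - 1) + 1)
    (Nm : ℝ) (hNmdef : Nm = Lam / lam * ((N : ℝ) - 1) + 1)
    (γ : ℝ) (hγ2 : γ < 2)
    (f : ℝ → ℝ)
    (hfpos : ∀ r ∈ Ioo (0:ℝ) 1, 0 < f r)
    (u : ℝ → ℝ) (hu : ContDiffOn ℝ 2 u (Ioo 0 1))
    (hub : ∃ C : ℝ, ∀ r ∈ Ioo (0:ℝ) 1, |u r| ≤ C)
    (hineq : ∀ r ∈ Ioo (0:ℝ) 1, f r * r ^ (-γ) ≤ pucciP lam Lam N u r) :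
    ∃ r₀ ∈ Ioo (0:ℝ) 1,
      (∀ r ∈ Ioo (0:ℝ) r₀, 0 ≤ deriv u r) ∧
      Tendsto (fun r => deriv u r * r ^ (Nm - 1)) (nhdsWithin 0 (Ioi 0)) (nhds 0) ∧
      (∀ r ∈ Ioo (0:ℝ) r₀,
        sInf (f '' Ioo 0 1) / (Lam * (Nm - γ)) * r ^ (1 - γ) ≤ deriv u r) := by
  have hLam : 0 < Lam := hlam.trans_le hlL
  have hβ : 1 < lam / Lam * ((N : ℝ) - 1) := by linarith
  have hN1 : (0 : ℝ) < N - 1 := pos_of_mul_pos_right (one_pos.trans hβ) (div_pos hlam hLam).le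
  have hN : 1 ≤ N := by exact_mod_cast (sub_pos.1 hN1).le
  have hNm2 : 2 < Nm := by
    have : lam / Lam ≤ Lam / lam :=
      ((div_le_one hLam).2 hlL).trans ((one_le_div hlam).2 hlL)
    nlinarith
  obtain ⟨C, hC⟩ := hub
  have hfm : ∀ r ∈ Ioo (0 : ℝ) 1, sInf (f '' Ioo 0 1) ≤ f r := fun r hr =>
    csInf_le ⟨0, by rintro _ ⟨x, hx, rfl⟩; exact (hfpos x hx).le⟩ (mem_image_of_mem f hr)
  have hm : 0 ≤ sInf (f '' Ioo 0 1) :=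
    le_csInf ((nonempty_Ioo.2 one_pos).image f) (by rintro _ ⟨x, hx, rfl⟩; exact (hfpos x hx).le)
  have hP : ∀ r ∈ Ioo (0 : ℝ) 1, 0 < pucciP lam Lam N u r := fun r hr =>
    (mul_pos (hfpos r hr) (rpow_pos_of_pos hr.1 _)).trans_le (hineq r hr)
  have hnn := deriv_nonneg_of_pucciP_pos hlam hLam hN hβ hu
    ⟨C, by rintro _ ⟨r, hr, rfl⟩; exact (abs_le.1 (hC r hr)).2⟩ hP
  obtain ⟨hlim, hlow⟩ := tendsto_deriv_mul_rpow_and_le_deriv hlam hlL hN hNmdef hNm2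
    (by linarith) hm hu ⟨-C, by rintro _ ⟨r, hr, rfl⟩; exact (abs_le.1 (hC r hr)).1⟩ hnn hP
    fun r hr => (mul_le_mul_of_nonneg_right (hfm r hr) (rpow_nonneg hr.1.le _)).trans (hineq r hr)
  have hsub : Ioo (0 : ℝ) (1 / 2) ⊆ Ioo 0 1 := Ioo_subset_Ioo_right (by norm_num)
  exact ⟨1 / 2, by norm_num, fun r hr => hnn r (hsub hr), hlim, fun r hr => hlow r (hsub hr)⟩

theorem stmt7 (N : ℕ) (hN : 2 ≤ N) (lam Lam : ℝ) (hlam : 0 < lam) (hlL : lam ≤ Lam)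
    (hNp : 2 < lam / Lam * ((N : ℝ) - 1) + 1)
    (Nm : ℝ) (hNmdef : Nm = Lam / lam * ((N : ℝ) - 1) + 1)
    (γ : ℝ) (hγ0 : 0 < γ) (hγ2 : γ < 2)
    (f : ℝ → ℝ) (hfc : ContinuousOn f (Ioo 0 1))
    (hfb : ∃ C : ℝ, ∀ r ∈ Ioo (0:ℝ) 1, |f r| ≤ C)
    (hfpos : ∀ r ∈ Ioo (0:ℝ) 1, 0 < f r)
    (u : ℝ → ℝ) (hu : ContDiffOn ℝ 2 u (Ioo 0 1))
    (hub : ∃ C : ℝ, ∀ r ∈ Ioo (0:ℝ) 1, |u r| ≤ C)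
    (hineq : ∀ r ∈ Ioo (0:ℝ) 1, f r * r ^ (-γ) ≤ pucciP lam Lam N u r) :
    ∃ r₀ ∈ Ioo (0:ℝ) 1,
      (∀ r ∈ Ioo (0:ℝ) r₀, 0 ≤ deriv u r) ∧
      Tendsto (fun r => deriv u r * r ^ (Nm - 1)) (nhdsWithin 0 (Ioi 0)) (nhds 0) ∧
      (∀ r ∈ Ioo (0:ℝ) r₀,
        sInf (f '' Ioo 0 1) / (Lam * (Nm - γ)) * r ^ (1 - γ) ≤ deriv u r) :=
  stmt7_general N lam Lam hlam hlL hNp Nm hNmdef γ hγ2 f hfpos u hu hub hineq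

end
end

section
/- Let 0 < γ < 2, let f : (0,1) → ℝ be continuous, bounded and everywhere positive, and let u : (0,1) → ℝ be a bounded C² function satisfying 𝓜⁻[u](r) ≤ −f(r)·r^{−γ} for all r ∈ (0,1). Then there exists r₀ ∈ (0,1) such that u'(r) ≤ 0 for all r ∈ (0,r₀), lim_{r→0⁺} u'(r)·r^{Ñ₋−1} = 0, and u'(r) ≤ −(inf_{(0,1)} f)/(Λ·(Ñ₋−γ))·r^{1−γ} for all r ∈ (0,r₀). If moreover 𝓜⁻[u](r) = −f(r)·r^{−γ} on (0,1), then there exists c > 0 with |u'(r)| ≤ c·r^{1−γ} for all r ∈ (0,r₀). -/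
/-!
Put `β₊ = Ñ₊ - 1` and `β₋ = Ñ₋ - 1`. Depending on the sign of `u'`, the Pucci inequality becomes an
Euler-type inequality for `u'`: where `u' ≥ 0`, `Λ (u'' + β₊ u'/r) ≤ 𝓜⁻[u] < 0`; where `u' ≤ 0`,
`Λ (u'' + β₋ u'/r) ≤ 𝓜⁻[u] ≤ Λ (u'' + β₊ u'/r)`. Hence `u' r^β₊` decreases where `u' > 0`,
`(u' + c r^{1-γ}) r^β₋` is nonincreasing, and in the equality case so is
`(-u' - C r^{1-γ}) r^β₊`, for the constants `c`, `C` of the theorem. Were one of the bounds false,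
this monotonicity would give `|u'| ≥ ε / r` near `0`, and `u` would be unbounded like `log r`.
The bound `u' ≤ -c r^{1-γ}` follows instead from `u' ≤ 0`: near `0`,
`(u' + c r^{1-γ}) r^β₋ ≤ c r^{Ñ₋-γ} → 0`.
-/

open Set Real Filter MeasureTheory

noncomputable section

section Pucci

variable {lam Lam : ℝ} {N : ℕ} {u : ℝ → ℝ} {r : ℝ}

lemma mul_add_le_pucciM_of_deriv_nonneg (hlam : 0 < lam) (hlL : lam ≤ Lam) (hN : 1 ≤ N)
    (hr : 0 < r) (hu : 0 ≤ deriv u r) (hP : pucciM lam Lam N u r ≤ 0) :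
    Lam * (deriv (deriv u) r + lam / Lam * ((N : ℝ) - 1) * (deriv u r / r)) ≤
      pucciM lam Lam N u r := by
  have hN' : (0 : ℝ) ≤ (N : ℝ) - 1 := by rw [sub_nonneg]; exact_mod_cast hN
  have ht : 0 ≤ deriv u r / r := div_nonneg hu hr.le
  have hLam : Lam ≠ 0 := (hlam.trans_le hlL).ne'
  unfold pucciM at hP ⊢
  rw [mul_add, ← mul_assoc, ← mul_assoc, mul_div_cancel₀ _ hLam]
  rw [max_eq_left ht, max_eq_right (neg_nonpos.2 ht)] at hP ⊢
  rcases le_total 0 (deriv (deriv u) r) with hs | hs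
  · -- both terms of `𝓜⁻[u] ≤ 0` are then nonnegative, which forces `u'' = 0`
    rw [max_eq_left hs, max_eq_right (neg_nonpos.2 hs)] at hP ⊢
    have hs0 : deriv (deriv u) r ≤ 0 := by nlinarith [mul_nonneg hN' ht]
    nlinarith
  · rw [max_eq_right hs, max_eq_left (neg_nonneg.2 hs)]
    linarith

lemma mul_add_le_pucciM_of_deriv_nonpos (hlam : 0 < lam) (hlL : lam ≤ Lam) (hN : 1 ≤ N)
    (hr : 0 < r) (hu : deriv u r ≤ 0) (hP : pucciM lam Lam N u r ≤ 0) :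
    Lam * (deriv (deriv u) r + Lam / lam * ((N : ℝ) - 1) * (deriv u r / r)) ≤
      pucciM lam Lam N u r := by
  have hN' : (0 : ℝ) ≤ (N : ℝ) - 1 := by rw [sub_nonneg]; exact_mod_cast hN
  have ht : deriv u r / r ≤ 0 := div_nonpos_of_nonpos_of_nonneg hu hr.le
  have hLl : 1 ≤ Lam / lam := (one_le_div hlam).2 hlL
  unfold pucciM at hP ⊢
  rw [max_eq_right ht, max_eq_left (neg_nonneg.2 ht)] at hP ⊢
  rcases le_total 0 (deriv (deriv u) r) with hs | hs
  · rw [max_eq_left hs, max_eq_right (neg_nonpos.2 hs)] at hP ⊢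
    -- here the left-hand side is `(Λ / λ) 𝓜⁻[u] ≤ 𝓜⁻[u]`
    have hscale : Lam * (deriv (deriv u) r + Lam / lam * ((N : ℝ) - 1) * (deriv u r / r)) =
        Lam / lam * (lam * deriv (deriv u) r + ((N : ℝ) - 1) * (Lam * (deriv u r / r))) := by
      field_simp
    rw [hscale]
    nlinarith
  · have hk : Lam / lam * (((N : ℝ) - 1) * (deriv u r / r)) ≤ ((N : ℝ) - 1) * (deriv u r / r) :=
      by nlinarith [mul_nonpos_of_nonneg_of_nonpos hN' ht]
    rw [max_eq_right hs, max_eq_left (neg_nonneg.2 hs)]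
    nlinarith

lemma pucciM_le_mul_add_of_deriv_nonpos (hlam : 0 < lam) (hlL : lam ≤ Lam) (hN : 1 ≤ N)
    (hr : 0 < r) (hu : deriv u r ≤ 0) :
    pucciM lam Lam N u r ≤
      Lam * (deriv (deriv u) r + lam / Lam * ((N : ℝ) - 1) * (deriv u r / r)) := by
  have hN' : (0 : ℝ) ≤ (N : ℝ) - 1 := by rw [sub_nonneg]; exact_mod_cast hN
  have ht : deriv u r / r ≤ 0 := div_nonpos_of_nonpos_of_nonneg hu hr.le
  have hLam : Lam ≠ 0 := (hlam.trans_le hlL).ne'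
  unfold pucciM
  rw [mul_add, ← mul_assoc, ← mul_assoc, mul_div_cancel₀ _ hLam, max_eq_right ht,
    max_eq_left (neg_nonneg.2 ht)]
  rcases le_total 0 (deriv (deriv u) r) with hs | hs
  · rw [max_eq_left hs, max_eq_right (neg_nonpos.2 hs)]
    nlinarith [mul_nonpos_of_nonneg_of_nonpos hN' ht]
  · rw [max_eq_right hs, max_eq_left (neg_nonneg.2 hs)]
    nlinarith [mul_nonpos_of_nonneg_of_nonpos hN' ht]

end Pucci

open Topology

lemma ContDiffOn.hasDerivAt_of_isOpen {u : ℝ → ℝ} {s : Set ℝ} (hu : ContDiffOn ℝ 2 u s)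
    (hs : IsOpen s) {r : ℝ} (hr : r ∈ s) : HasDerivAt u (deriv u r) r :=
  ((hu.differentiableOn two_ne_zero).differentiableAt (hs.mem_nhds hr)).hasDerivAt

lemma ContDiffOn.hasDerivAt_deriv_of_isOpen {u : ℝ → ℝ} {s : Set ℝ}
    (hu : ContDiffOn ℝ 2 u s) (hs : IsOpen s) {r : ℝ} (hr : r ∈ s) :
    HasDerivAt (deriv u) (deriv (deriv u) r) r :=
  (((hu.deriv_of_isOpen hs (by norm_num)).differentiableOn one_ne_zero).differentiableAt
    (hs.mem_nhds hr)).hasDerivAt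

lemma hasDerivAt_mul_rpow {g : ℝ → ℝ} {g' p r : ℝ} (hg : HasDerivAt g g' r) (hr : 0 < r) :
    HasDerivAt (fun x => g x * x ^ p) ((g' + p * (g r / r)) * r ^ p) r := by
  refine (hg.mul (hasDerivAt_rpow_const (p := p) (Or.inl hr.ne'))).congr_deriv ?_
  rw [rpow_sub_one hr.ne']
  ring

lemma antitoneOn_mul_rpow {s : Set ℝ} {g g' : ℝ → ℝ} {p : ℝ} (hs : Convex ℝ s)
    (hs0 : s ⊆ Ioi 0) (hg : ∀ r ∈ s, HasDerivAt g (g' r) r)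
    (h : ∀ r ∈ s, g' r + p * (g r / r) ≤ 0) : AntitoneOn (fun r => g r * r ^ p) s := by
  have hd : ∀ r ∈ s, HasDerivAt (fun x => g x * x ^ p) ((g' r + p * (g r / r)) * r ^ p) r :=
    fun r hr => hasDerivAt_mul_rpow (hg r hr) (hs0 hr)
  refine antitoneOn_of_hasDerivWithinAt_nonpos hs
    (fun r hr => (hd r hr).continuousAt.continuousWithinAt)
    (fun r hr => (hd r (interior_subset hr)).hasDerivWithinAt) fun r hr => ?_
  exact mul_nonpos_of_nonpos_of_nonneg (h r (interior_subset hr))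
    (rpow_nonneg (hs0 (interior_subset hr)).le _)

lemma antitoneOn_add_mul_rpow_mul_rpow {s : Set ℝ} {g g' : ℝ → ℝ} {p γ a : ℝ}
    (hs : Convex ℝ s) (hs0 : s ⊆ Ioi 0) (hq : p + 1 - γ ≠ 0)
    (hg : ∀ r ∈ s, HasDerivAt g (g' r) r)
    (h : ∀ r ∈ s, g' r + p * (g r / r) ≤ -(a * r ^ (-γ))) :
    AntitoneOn (fun r => (g r + a / (p + 1 - γ) * r ^ (1 - γ)) * r ^ p) s := by
  -- `a / (p + 1 - γ) * r ^ (1 - γ)` solves `y' + p y / r = a r ^ (-γ)`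
  refine antitoneOn_mul_rpow (g' := fun r => g' r + a / (p + 1 - γ) * ((1 - γ) * r ^ (-γ)))
    hs hs0 (fun r hr => ?_) fun r hr => ?_
  · have := (hasDerivAt_rpow_const (p := 1 - γ) (Or.inl (hs0 hr).ne')).const_mul
      (a / (p + 1 - γ))
    rw [sub_sub_cancel_left] at this
    exact (hg r hr).add this
  · have hr0 : (0 : ℝ) < r := hs0 hr
    have hpow : r ^ (1 - γ) / r = r ^ (-γ) := by
      rw [← rpow_sub_one hr0.ne']; ring_nf
    have key : g' r + a / (p + 1 - γ) * ((1 - γ) * r ^ (-γ)) +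
        p * ((g r + a / (p + 1 - γ) * r ^ (1 - γ)) / r) =
        g' r + p * (g r / r) + a * r ^ (-γ) := by
      rw [add_div, mul_div_assoc, hpow]
      field_simp
      ring
    rw [key]
    linarith [h r hr]

lemma le_apply_of_hasDerivAt_neg_of_pos {w w' : ℝ → ℝ} {x r : ℝ} (hxr : x ≤ r)
    (hw : ∀ y ∈ Icc x r, HasDerivAt w (w' y) y) (hneg : ∀ y ∈ Icc x r, 0 < w y → w' y < 0)
    (hr : 0 < w r) : w r ≤ w x := by
  -- The fencing theorems of Mathlib propagate bounds to the right: reflect `w` about `r`.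
  have hmem : ∀ t ∈ Icc 0 (r - x), r - t ∈ Icc x r :=
    fun t ht => ⟨by linarith [ht.2], by linarith [ht.1]⟩
  have hderiv : ∀ t ∈ Icc 0 (r - x), HasDerivAt (fun t => -w (r - t)) (w' (r - t)) t :=
    fun t ht => by
      have := ((hw _ (hmem t ht)).comp_const_sub r t).neg
      rwa [neg_neg] at this
  have := image_le_of_deriv_right_lt_deriv_boundary (f := fun t => -w (r - t)) (a := 0)
    (b := r - x) (B := fun _ => -w r) (B' := fun _ => 0)
    (fun t ht => (hderiv t ht).continuousAt.continuousWithinAt)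
    (fun t ht => (hderiv t (Ico_subset_Icc_self ht)).hasDerivWithinAt) (by simp)
    (fun _ => hasDerivAt_const _ _)
    (fun t ht heq => hneg _ (hmem t (Ico_subset_Icc_self ht)) (neg_inj.1 heq ▸ hr))
    ⟨sub_nonneg.2 hxr, le_rfl⟩
  simpa using this

lemma not_forall_le_deriv_mul_self {φ φ' : ℝ → ℝ} {b c : ℝ} (hb : 0 < b) (hc : 0 < c)
    (hφ : ∀ x ∈ Ioo 0 b, HasDerivAt φ (φ' x) x) (hφb : BddBelow (φ '' Ioo 0 b)) :
    ¬ ∀ x ∈ Ioo 0 b, c ≤ φ' x * x := by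
  intro hle
  obtain ⟨L, hL⟩ := hφb
  have hψ : MonotoneOn (fun x => φ x - c * log x) (Ioo 0 b) := by
    have hd : ∀ x ∈ Ioo 0 b, HasDerivAt (fun x => φ x - c * log x) (φ' x - c * x⁻¹) x :=
      fun x hx => (hφ x hx).sub ((hasDerivAt_log hx.1.ne').const_mul c)
    refine monotoneOn_of_hasDerivWithinAt_nonneg (convex_Ioo 0 b)
      (fun x hx => (hd x hx).continuousAt.continuousWithinAt)
      (fun x hx => (hd x (interior_subset hx)).hasDerivWithinAt) fun x hx => ?_
    rw [interior_Ioo] at hx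
    rw [sub_nonneg, ← div_eq_mul_inv, div_le_iff₀ hx.1]
    exact hle x hx
  have hy : b / 2 ∈ Ioo 0 b := ⟨half_pos hb, half_lt_self hb⟩
  have hlog := ((tendsto_log_nhdsGT_zero.const_mul_atBot hc).eventually_lt_atBot
    (L - (φ (b / 2) - c * log (b / 2)))).and (Ioo_mem_nhdsGT hy.1)
  obtain ⟨x, hx, hxy⟩ := hlog.exists
  have hxb : x ∈ Ioo 0 b := ⟨hxy.1, hxy.2.trans hy.2⟩
  have hψx : φ x - c * log x ≤ φ (b / 2) - c * log (b / 2) := hψ hxb hy hxy.2.le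
  have hLx : L ≤ φ x := hL ⟨x, hxb, rfl⟩
  linarith

lemma not_forall_le_deriv_mul_rpow {φ φ' : ℝ → ℝ} {b c p : ℝ} (hb : 0 < b) (hb1 : b ≤ 1)
    (hc : 0 < c) (hp : 1 ≤ p) (hφ : ∀ x ∈ Ioo 0 b, HasDerivAt φ (φ' x) x)
    (hφb : BddBelow (φ '' Ioo 0 b)) : ¬ ∀ x ∈ Ioo 0 b, c ≤ φ' x * x ^ p := by
  refine fun hle => not_forall_le_deriv_mul_self hb hc hφ hφb fun x hx => ?_
  have hφ' : 0 < φ' x := pos_of_mul_pos_left (hc.trans_le (hle x hx)) (rpow_nonneg hx.1.le p)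
  calc c ≤ φ' x * x ^ p := hle x hx
    _ ≤ φ' x * x := by
      gcongr
      exact rpow_le_self_of_le_one hx.1.le (hx.2.trans_le hb1).le hp

lemma bddBelow_image_neg_of_bddAbove {φ : ℝ → ℝ} {s : Set ℝ} (h : BddAbove (φ '' s)) :
    BddBelow ((fun x => -φ x) '' s) := by
  rw [← image_image (g := Neg.neg) (f := φ), image_neg_eq_neg, bddBelow_neg]
  exact h

lemma tendsto_mul_rpow_nhdsGT_zero_of_antitoneOn {φ g : ℝ → ℝ} {p : ℝ} (hp : 1 ≤ p)
    (hφ : ∀ r ∈ Ioo (0 : ℝ) 1, HasDerivAt φ (g r) r) (hφb : BddAbove (φ '' Ioo 0 1))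
    (hg : ∀ r ∈ Ioo (0 : ℝ) 1, g r ≤ 0) (hanti : AntitoneOn (fun r => g r * r ^ p) (Ioo 0 1)) :
    Tendsto (fun r => g r * r ^ p) (𝓝[>] 0) (𝓝 0) := by
  refine tendsto_order.2 ⟨fun b hb => ?_, fun b hb => ?_⟩
  · by_contra hfreq
    rw [not_eventually] at hfreq
    refine not_forall_le_deriv_mul_rpow one_pos le_rfl (neg_pos.2 hb) hp
      (fun x hx => (hφ x hx).neg) (bddBelow_image_neg_of_bddAbove hφb) fun y hy => ?_
    obtain ⟨x, hxb, hxy⟩ := (hfreq.and_eventually (Ioo_mem_nhdsGT hy.1)).exists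
    have := hanti ⟨hxy.1, hxy.2.trans hy.2⟩ hy hxy.2.le
    simp only [not_lt] at hxb this
    linarith
  · filter_upwards [Ioo_mem_nhdsGT one_pos] with r hr
    exact (mul_nonpos_of_nonpos_of_nonneg (hg r hr) (rpow_nonneg hr.1.le p)).trans_lt hb

lemma le_neg_mul_rpow_of_deriv_add_le {g g' : ℝ → ℝ} {p γ a : ℝ} (hq : 0 < p + 1 - γ)
    (hg : ∀ r ∈ Ioo (0 : ℝ) 1, HasDerivAt g (g' r) r) (hg0 : ∀ r ∈ Ioo (0 : ℝ) 1, g r ≤ 0)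
    (h : ∀ r ∈ Ioo (0 : ℝ) 1, g' r + p * (g r / r) ≤ -(a * r ^ (-γ))) :
    ∀ r ∈ Ioo (0 : ℝ) 1, g r ≤ -(a / (p + 1 - γ)) * r ^ (1 - γ) := by
  intro r hr
  set c := a / (p + 1 - γ)
  have hV := antitoneOn_add_mul_rpow_mul_rpow (convex_Ioo 0 1) Ioo_subset_Ioi_self hq.ne' hg h
  have hlim : Tendsto (fun x : ℝ => c * x ^ (p + 1 - γ)) (𝓝[>] 0) (𝓝 0) := by
    simpa [zero_rpow hq.ne'] using ((continuousAt_rpow_const 0 _ (Or.inr hq.le)).tendsto.mono_left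
      nhdsWithin_le_nhds).const_mul c
  have hVr : (g r + c * r ^ (1 - γ)) * r ^ p ≤ 0 := by
    refine ge_of_tendsto hlim ?_
    filter_upwards [Ioo_mem_nhdsGT hr.1] with x hx
    have hx1 : x ∈ Ioo (0 : ℝ) 1 := ⟨hx.1, hx.2.trans hr.2⟩
    calc (g r + c * r ^ (1 - γ)) * r ^ p ≤ (g x + c * x ^ (1 - γ)) * x ^ p := hV hx1 hr hx.2.le
      _ ≤ c * x ^ (1 - γ) * x ^ p :=
        mul_le_mul_of_nonneg_right (by linarith [hg0 x hx1]) (rpow_nonneg hx.1.le p)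
      _ = c * x ^ (p + 1 - γ) := by
        rw [mul_assoc, ← rpow_add hx.1]
        ring_nf
  have := nonpos_of_mul_nonpos_left hVr (rpow_pos_of_pos hr.1 p)
  linarith

lemma neg_le_mul_rpow_of_le_deriv_add {φ g g' : ℝ → ℝ} {p γ M : ℝ} (hp : 1 ≤ p)
    (hq : 0 < p + 1 - γ) (hM : 0 ≤ M) (hφ : ∀ r ∈ Ioo (0 : ℝ) 1, HasDerivAt φ (g r) r)
    (hφb : BddAbove (φ '' Ioo 0 1)) (hg : ∀ r ∈ Ioo (0 : ℝ) 1, HasDerivAt g (g' r) r)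
    (h : ∀ r ∈ Ioo (0 : ℝ) 1, -(M * r ^ (-γ)) ≤ g' r + p * (g r / r)) :
    ∀ r ∈ Ioo (0 : ℝ) 1, -g r ≤ M / (p + 1 - γ) * r ^ (1 - γ) := by
  intro r hr
  set K := M / (p + 1 - γ)
  have hV := antitoneOn_add_mul_rpow_mul_rpow (g := fun x => -g x) (g' := fun x => -g' x)
    (a := -M) (convex_Ioo 0 1) Ioo_subset_Ioi_self hq.ne' (fun x hx => (hg x hx).neg)
    fun x hx => by simp only [neg_div, mul_neg, neg_mul, neg_neg]; linarith [h x hx]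
  simp only [neg_div, neg_mul, ← sub_eq_add_neg] at hV
  by_contra! hlt
  refine not_forall_le_deriv_mul_rpow hr.1 hr.2.le
    (mul_pos (sub_pos.2 hlt) (rpow_pos_of_pos hr.1 p)) hp
    (fun x hx => (hφ x ⟨hx.1, hx.2.trans hr.2⟩).neg)
    ((bddBelow_image_neg_of_bddAbove hφb).mono (image_mono (Ioo_subset_Ioo_right hr.2.le)))
    fun x hx => ?_
  calc (-g r - K * r ^ (1 - γ)) * r ^ p ≤ (-g x - K * x ^ (1 - γ)) * x ^ p :=
        hV ⟨hx.1, hx.2.trans hr.2⟩ hr hx.2.le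
    _ ≤ -g x * x ^ p := by
        have : 0 ≤ K * x ^ (1 - γ) := mul_nonneg (div_nonneg hM hq.le) (rpow_nonneg hx.1.le _)
        exact mul_le_mul_of_nonneg_right (by linarith) (rpow_nonneg hx.1.le p)

lemma deriv_nonpos_of_pucciM_neg {lam Lam : ℝ} {N : ℕ} {u : ℝ → ℝ} (hlam : 0 < lam)
    (hlL : lam ≤ Lam) (hN : 1 ≤ N) (hβ : 1 ≤ lam / Lam * ((N : ℝ) - 1))
    (hu' : ∀ r ∈ Ioo (0 : ℝ) 1, HasDerivAt u (deriv u r) r)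
    (hu'' : ∀ r ∈ Ioo (0 : ℝ) 1, HasDerivAt (deriv u) (deriv (deriv u) r) r)
    (hub : BddBelow (u '' Ioo 0 1)) (hP : ∀ r ∈ Ioo (0 : ℝ) 1, pucciM lam Lam N u r < 0) :
    ∀ r ∈ Ioo (0 : ℝ) 1, deriv u r ≤ 0 := by
  intro r₁ hr₁
  by_contra! hpos
  set β := lam / Lam * ((N : ℝ) - 1)
  have hw₁ : 0 < deriv u r₁ * r₁ ^ β := mul_pos hpos (rpow_pos_of_pos hr₁.1 β)
  have hw : ∀ x ∈ Ioo 0 r₁, deriv u r₁ * r₁ ^ β ≤ deriv u x * x ^ β := by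
    intro x hx
    have hmem : ∀ y ∈ Icc x r₁, y ∈ Ioo (0 : ℝ) 1 :=
      fun y hy => ⟨hx.1.trans_le hy.1, hy.2.trans_lt hr₁.2⟩
    refine le_apply_of_hasDerivAt_neg_of_pos (w := fun x => deriv u x * x ^ β) hx.2.le
      (fun y hy => hasDerivAt_mul_rpow (hu'' y (hmem y hy)) (hmem y hy).1)
      (fun y hy hwy => ?_) hw₁
    have hy := hmem y hy
    have hy' : 0 < deriv u y := pos_of_mul_pos_left hwy (rpow_nonneg hy.1.le β)
    have := (mul_add_le_pucciM_of_deriv_nonneg hlam hlL hN hy.1 hy'.le (hP y hy).le).trans_lt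
      (hP y hy)
    exact mul_neg_of_neg_of_pos (neg_of_mul_neg_right this (hlam.trans_le hlL).le)
      (rpow_pos_of_pos hy.1 β)
  exact not_forall_le_deriv_mul_rpow hr₁.1 hr₁.2.le hw₁ hβ
    (fun x hx => hu' x ⟨hx.1, hx.2.trans hr₁.2⟩)
    (hub.mono (image_mono (Ioo_subset_Ioo_right hr₁.2.le))) hw

lemma tendsto_deriv_mul_rpow_of_pucciM_nonpos {lam Lam : ℝ} {N : ℕ} {u : ℝ → ℝ} (hlam : 0 < lam)
    (hlL : lam ≤ Lam) (hN : 1 ≤ N) (hp : 1 ≤ Lam / lam * ((N : ℝ) - 1))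
    (hu' : ∀ r ∈ Ioo (0 : ℝ) 1, HasDerivAt u (deriv u r) r)
    (hu'' : ∀ r ∈ Ioo (0 : ℝ) 1, HasDerivAt (deriv u) (deriv (deriv u) r) r)
    (hub : BddAbove (u '' Ioo 0 1)) (hneg : ∀ r ∈ Ioo (0 : ℝ) 1, deriv u r ≤ 0)
    (hP : ∀ r ∈ Ioo (0 : ℝ) 1, pucciM lam Lam N u r ≤ 0) :
    Tendsto (fun r => deriv u r * r ^ (Lam / lam * ((N : ℝ) - 1))) (𝓝[>] 0) (𝓝 0) :=
  tendsto_mul_rpow_nhdsGT_zero_of_antitoneOn hp hu' hub hneg <|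
    antitoneOn_mul_rpow (convex_Ioo 0 1) Ioo_subset_Ioi_self hu'' fun r hr =>
      nonpos_of_mul_nonpos_right ((mul_add_le_pucciM_of_deriv_nonpos hlam hlL hN hr.1
        (hneg r hr) (hP r hr)).trans (hP r hr)) (hlam.trans_le hlL)

lemma deriv_le_neg_mul_rpow_of_pucciM_le {lam Lam γ a : ℝ} {N : ℕ} {u : ℝ → ℝ}
    (hlam : 0 < lam) (hlL : lam ≤ Lam) (hN : 1 ≤ N) (hγ : γ < Lam / lam * ((N : ℝ) - 1) + 1)
    (hu'' : ∀ r ∈ Ioo (0 : ℝ) 1, HasDerivAt (deriv u) (deriv (deriv u) r) r)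
    (hneg : ∀ r ∈ Ioo (0 : ℝ) 1, deriv u r ≤ 0) (ha : 0 ≤ a)
    (hP : ∀ r ∈ Ioo (0 : ℝ) 1, pucciM lam Lam N u r ≤ -(a * r ^ (-γ))) :
    ∀ r ∈ Ioo (0 : ℝ) 1,
      deriv u r ≤ -(a / (Lam * (Lam / lam * ((N : ℝ) - 1) + 1 - γ))) * r ^ (1 - γ) := by
  have hLam : 0 < Lam := hlam.trans_le hlL
  have := le_neg_mul_rpow_of_deriv_add_le (p := Lam / lam * ((N : ℝ) - 1)) (γ := γ)
    (a := a / Lam) (by linarith) hu'' hneg fun r hr => by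
    have hP0 : pucciM lam Lam N u r ≤ 0 :=
      (hP r hr).trans (neg_nonpos.2 (mul_nonneg ha (rpow_nonneg hr.1.le _)))
    have := (mul_add_le_pucciM_of_deriv_nonpos hlam hlL hN hr.1 (hneg r hr) hP0).trans (hP r hr)
    rw [show -(a / Lam * r ^ (-γ)) = -(a * r ^ (-γ)) / Lam by ring, le_div_iff₀' hLam]
    exact this
  simpa only [div_div] using this

lemma abs_deriv_le_mul_rpow_of_le_pucciM {lam Lam γ M : ℝ} {N : ℕ} {u : ℝ → ℝ}
    (hlam : 0 < lam) (hlL : lam ≤ Lam) (hN : 1 ≤ N) (hβ : 1 ≤ lam / Lam * ((N : ℝ) - 1))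
    (hγ : γ < lam / Lam * ((N : ℝ) - 1) + 1)
    (hu' : ∀ r ∈ Ioo (0 : ℝ) 1, HasDerivAt u (deriv u r) r)
    (hu'' : ∀ r ∈ Ioo (0 : ℝ) 1, HasDerivAt (deriv u) (deriv (deriv u) r) r)
    (hub : BddAbove (u '' Ioo 0 1)) (hneg : ∀ r ∈ Ioo (0 : ℝ) 1, deriv u r ≤ 0) (hM : 0 ≤ M)
    (hP : ∀ r ∈ Ioo (0 : ℝ) 1, -(M * r ^ (-γ)) ≤ pucciM lam Lam N u r) :
    ∀ r ∈ Ioo (0 : ℝ) 1,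
      |deriv u r| ≤ M / (Lam * (lam / Lam * ((N : ℝ) - 1) + 1 - γ)) * r ^ (1 - γ) := by
  have hLam : 0 < Lam := hlam.trans_le hlL
  have := neg_le_mul_rpow_of_le_deriv_add (p := lam / Lam * ((N : ℝ) - 1)) (γ := γ) (M := M / Lam)
    hβ (by linarith) (by positivity) hu' hub hu'' fun r hr => by
      have := (hP r hr).trans (pucciM_le_mul_add_of_deriv_nonpos hlam hlL hN hr.1 (hneg r hr))
      rw [show -(M / Lam * r ^ (-γ)) = -(M * r ^ (-γ)) / Lam by ring, div_le_iff₀' hLam]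
      exact this
  intro r hr
  rw [abs_of_nonpos (hneg r hr), ← div_div]
  exact this r hr

theorem stmt9_general (N : ℕ) (hN : 2 ≤ N) (lam Lam : ℝ) (hlam : 0 < lam) (hlL : lam ≤ Lam)
    (hNp : 2 < lam / Lam * ((N : ℝ) - 1) + 1)
    (Nm : ℝ) (hNmdef : Nm = Lam / lam * ((N : ℝ) - 1) + 1)
    (γ : ℝ) (hγ2 : γ < 2)
    (f : ℝ → ℝ)
    (hfb : ∃ C : ℝ, ∀ r ∈ Ioo (0:ℝ) 1, |f r| ≤ C)
    (hfpos : ∀ r ∈ Ioo (0:ℝ) 1, 0 < f r)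
    (u : ℝ → ℝ) (hu : ContDiffOn ℝ 2 u (Ioo 0 1))
    (hub : ∃ C : ℝ, ∀ r ∈ Ioo (0:ℝ) 1, |u r| ≤ C)
    (hineq : ∀ r ∈ Ioo (0:ℝ) 1, pucciM lam Lam N u r ≤ -(f r * r ^ (-γ))) :
    ∃ r₀ ∈ Ioo (0:ℝ) 1,
      (∀ r ∈ Ioo (0:ℝ) r₀, deriv u r ≤ 0) ∧
      Tendsto (fun r => deriv u r * r ^ (Nm - 1)) (nhdsWithin 0 (Ioi 0)) (nhds 0) ∧
      (∀ r ∈ Ioo (0:ℝ) r₀,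
        deriv u r ≤ -(sInf (f '' Ioo 0 1) / (Lam * (Nm - γ))) * r ^ (1 - γ)) ∧
      ((∀ r ∈ Ioo (0:ℝ) 1, pucciM lam Lam N u r = -(f r * r ^ (-γ))) →
        ∃ c : ℝ, 0 < c ∧ ∀ r ∈ Ioo (0:ℝ) r₀, |deriv u r| ≤ c * r ^ (1 - γ)) := by
  obtain ⟨Cf, hCf⟩ := hfb
  obtain ⟨C, hC⟩ := hub
  have hbdd : Bornology.IsBounded (u '' Ioo 0 1) :=
    isBounded_iff_forall_norm_le.2 ⟨C, forall_mem_image.2 hC⟩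
  have hN1 : 1 ≤ N := by omega
  have hNm : 1 ≤ Lam / lam * ((N : ℝ) - 1) := one_le_mul_of_one_le_of_one_le
    ((one_le_div hlam).2 hlL) (by linarith [show (2 : ℝ) ≤ N by exact_mod_cast hN])
  have hu' := fun r (hr : r ∈ Ioo (0 : ℝ) 1) => hu.hasDerivAt_of_isOpen isOpen_Ioo hr
  have hu'' := fun r (hr : r ∈ Ioo (0 : ℝ) 1) => hu.hasDerivAt_deriv_of_isOpen isOpen_Ioo hr
  have hweight : ∀ r ∈ Ioo (0 : ℝ) 1, ∀ a b : ℝ, a ≤ b → -(b * r ^ (-γ)) ≤ -(a * r ^ (-γ)) :=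
    fun r hr a b hab => neg_le_neg (mul_le_mul_of_nonneg_right hab (rpow_nonneg hr.1.le _))
  have hneg := deriv_nonpos_of_pucciM_neg hlam hlL hN1 (by linarith) hu' hu'' hbdd.bddBelow
    fun r hr => (hineq r hr).trans_lt <|
      neg_neg_of_pos (mul_pos (hfpos r hr) (rpow_pos_of_pos hr.1 _))
  have hf₀ : 0 ∈ lowerBounds (f '' Ioo 0 1) := forall_mem_image.2 fun r hr => (hfpos r hr).le
  have hhalf : Ioo (0 : ℝ) (1 / 2) ⊆ Ioo 0 1 := Ioo_subset_Ioo_right (by norm_num)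
  subst hNmdef
  refine ⟨1 / 2, by norm_num, fun r hr => hneg r (hhalf hr), ?_, fun r hr => ?_, fun heq => ?_⟩
  · simpa only [add_sub_cancel_right] using tendsto_deriv_mul_rpow_of_pucciM_nonpos hlam hlL hN1 hNm
      hu' hu'' hbdd.bddAbove hneg fun r hr =>
        by simpa using (hineq r hr).trans (hweight r hr 0 _ (hfpos r hr).le)
  · exact deriv_le_neg_mul_rpow_of_pucciM_le hlam hlL hN1 (by linarith) hu'' hneg
      (le_csInf ((nonempty_Ioo.2 one_pos).image f) hf₀)
      (fun r hr => (hineq r hr).trans (hweight r hr _ _ (csInf_le ⟨0, hf₀⟩ ⟨r, hr, rfl⟩)))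
      r (hhalf hr)
  · have hCf₀ : 0 < Cf :=
      (hfpos (1 / 2) (by norm_num)).trans_le ((le_abs_self _).trans (hCf _ (by norm_num)))
    refine ⟨_, div_pos hCf₀ (mul_pos (hlam.trans_le hlL) (by linarith)), fun r hr =>
      abs_deriv_le_mul_rpow_of_le_pucciM hlam hlL hN1 (by linarith) (by linarith) hu' hu''
        hbdd.bddAbove hneg hCf₀.le (fun r hr => ?_) r (hhalf hr)⟩
    exact (heq r hr).symm ▸ hweight r hr _ _ ((le_abs_self _).trans (hCf r hr))

theorem stmt9 (N : ℕ) (hN : 2 ≤ N) (lam Lam : ℝ) (hlam : 0 < lam) (hlL : lam ≤ Lam)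
    (hNp : 2 < lam / Lam * ((N : ℝ) - 1) + 1)
    (Nm : ℝ) (hNmdef : Nm = Lam / lam * ((N : ℝ) - 1) + 1)
    (γ : ℝ) (hγ0 : 0 < γ) (hγ2 : γ < 2)
    (f : ℝ → ℝ) (hfc : ContinuousOn f (Ioo 0 1))
    (hfb : ∃ C : ℝ, ∀ r ∈ Ioo (0:ℝ) 1, |f r| ≤ C)
    (hfpos : ∀ r ∈ Ioo (0:ℝ) 1, 0 < f r)
    (u : ℝ → ℝ) (hu : ContDiffOn ℝ 2 u (Ioo 0 1))
    (hub : ∃ C : ℝ, ∀ r ∈ Ioo (0:ℝ) 1, |u r| ≤ C)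
    (hineq : ∀ r ∈ Ioo (0:ℝ) 1, pucciM lam Lam N u r ≤ -(f r * r ^ (-γ))) :
    ∃ r₀ ∈ Ioo (0:ℝ) 1,
      (∀ r ∈ Ioo (0:ℝ) r₀, deriv u r ≤ 0) ∧
      Tendsto (fun r => deriv u r * r ^ (Nm - 1)) (nhdsWithin 0 (Ioi 0)) (nhds 0) ∧
      (∀ r ∈ Ioo (0:ℝ) r₀,
        deriv u r ≤ -(sInf (f '' Ioo 0 1) / (Lam * (Nm - γ))) * r ^ (1 - γ)) ∧
      ((∀ r ∈ Ioo (0:ℝ) 1, pucciM lam Lam N u r = -(f r * r ^ (-γ))) →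
        ∃ c : ℝ, 0 < c ∧ ∀ r ∈ Ioo (0:ℝ) r₀, |deriv u r| ≤ c * r ^ (1 - γ)) :=
  stmt9_general N hN lam Lam hlam hlL hNp Nm hNmdef γ hγ2 f hfb hfpos u hu hub hineq

end
end

section
/- Comparison principle in the punctured ball: let 0 < γ < 2, β ≥ 0, and let f, g : (0,1) → ℝ be continuous with f(r) ≥ g(r) for all r ∈ (0,1). Let u, v : [0,1] → ℝ be continuous on [0,1] and C² on (0,1), satisfying F(D(u''(r), u'(r)/r)) − β·u(r)·r^{−γ} ≥ f(r)·r^{−γ} and F(D(v''(r), v'(r)/r)) − β·v(r)·r^{−γ} ≤ g(r)·r^{−γ} for all r ∈ (0,1). If u(1) ≤ v(1), then u(r) ≤ v(r) for all r ∈ [0,1]. -/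
/-!
Compare `u - v` with the barrier `ε r ^ (-δ)`, `0 < δ < Ñ₊ - 2`, which blows up at the origin.
If `u - v - ε r ^ (-δ)` were positive somewhere, it would have an interior maximum `r₀`, where
`u r₀ > v r₀`. There the first- and second-order conditions and uniform ellipticity give
`F (D (u'', u' / r)) < F (D (v'', v' / r))`, since `Lam (δ + 1) < lam (N - 1)`, while the
differential inequalities, `f ≥ g` and `β ≥ 0` give the opposite inequality. Letting `ε → 0`
yields `u ≤ v` on `(0, 1]`, and continuity extends it to `0`.
-/

open Set Real Filter MeasureTheory Matrix

noncomputable section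

/-- The `N × N` diagonal matrix with first diagonal entry `a` and the remaining
`N - 1` diagonal entries equal to `b`. -/
def Dmat (N : ℕ) (a b : ℝ) : Matrix (Fin N) (Fin N) ℝ :=
  Matrix.diagonal (fun i => if (i : ℕ) = 0 then a else b)

/-- Uniform ellipticity with constants `0 < lam ≤ Lam`. -/
def UnifElliptic (N : ℕ) (lam Lam : ℝ) (F : Matrix (Fin N) (Fin N) ℝ → ℝ) : Prop :=
  ∀ M P : Matrix (Fin N) (Fin N) ℝ, M.IsSymm → P.PosSemidef →
    lam * P.trace ≤ F (M + P) - F M ∧ F (M + P) - F M ≤ Lam * P.trace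

/-- Rotation invariance. -/
def RotInvariant (N : ℕ) (F : Matrix (Fin N) (Fin N) ℝ → ℝ) : Prop :=
  ∀ O M : Matrix (Fin N) (Fin N) ℝ, Oᵀ * O = 1 → F (Oᵀ * M * O) = F M

/-- Positive one-homogeneity. -/
def PosHomog (N : ℕ) (F : Matrix (Fin N) (Fin N) ℝ → ℝ) : Prop :=
  ∀ t : ℝ, 0 < t → ∀ M : Matrix (Fin N) (Fin N) ℝ, F (t • M) = t * F M

/-- The radial principal eigenvalue `λ̄'_γ(F)` on the punctured unit ball. -/
def radialEV (N : ℕ) (F : Matrix (Fin N) (Fin N) ℝ → ℝ) (γ : ℝ) : ℝ :=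
  sSup {μ : ℝ | ∃ u : ℝ → ℝ, ContDiffOn ℝ 2 u (Ioo 0 1) ∧
    (∀ r ∈ Ioo (0:ℝ) 1, 0 < u r) ∧
    (∀ r ∈ Ioo (0:ℝ) 1,
      F (Dmat N (deriv (deriv u) r) (deriv u r / r)) + μ * u r * r ^ (-γ) ≤ 0)}

open Topology

lemma Dmat_add (N : ℕ) (x y p q : ℝ) :
    Dmat N x y + Dmat N p q = Dmat N (x + p) (y + q) := by
  rw [Dmat, Dmat, Dmat, diagonal_add]
  congr 1
  ext i
  split_ifs <;> rfl

lemma isSymm_Dmat (N : ℕ) (x y : ℝ) : (Dmat N x y).IsSymm :=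
  isSymm_diagonal _

lemma posSemidef_Dmat (N : ℕ) {p q : ℝ} (hp : 0 ≤ p) (hq : 0 ≤ q) :
    (Dmat N p q).PosSemidef :=
  PosSemidef.diagonal fun i => by dsimp; split_ifs <;> assumption

lemma trace_Dmat {N : ℕ} (hN : 1 ≤ N) (p q : ℝ) :
    (Dmat N p q).trace = p + ((N : ℝ) - 1) * q := by
  obtain ⟨n, rfl⟩ : ∃ n, N = n + 1 := ⟨N - 1, by omega⟩
  simp [Dmat, trace_diagonal, Fin.sum_univ_succ]

lemma UnifElliptic.Dmat_sub_bounds {N : ℕ} {lam Lam : ℝ} {F : Matrix (Fin N) (Fin N) ℝ → ℝ}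
    (hF : UnifElliptic N lam Lam F) (hN : 1 ≤ N) {x y z w : ℝ} (hxz : x ≤ z) (hyw : y ≤ w) :
    lam * ((z - x) + ((N : ℝ) - 1) * (w - y)) ≤ F (Dmat N z w) - F (Dmat N x y) ∧
      F (Dmat N z w) - F (Dmat N x y) ≤ Lam * ((z - x) + ((N : ℝ) - 1) * (w - y)) := by
  have h := hF (Dmat N x y) (Dmat N (z - x) (w - y)) (isSymm_Dmat N x y)
    (posSemidef_Dmat N (sub_nonneg.2 hxz) (sub_nonneg.2 hyw))
  rwa [Dmat_add, trace_Dmat hN, add_sub_cancel, add_sub_cancel] at h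

lemma UnifElliptic.map_Dmat_lt {N : ℕ} {lam Lam : ℝ} {F : Matrix (Fin N) (Fin N) ℝ → ℝ}
    (hF : UnifElliptic N lam Lam F) (hN : 1 ≤ N) (hlam : 0 ≤ lam) {s t A B C D : ℝ}
    (hs : 0 ≤ s) (hsN : Lam * s < lam * ((N : ℝ) - 1)) (ht : 0 < t)
    (hA : A ≤ C + s * t) (hB : B + t = D) :
    F (Dmat N A B) < F (Dmat N C D) := by
  have hD : D - B = t := by linarith
  have hlow := (hF.Dmat_sub_bounds hN hA (show B ≤ D by linarith)).1
  have hup := (hF.Dmat_sub_bounds hN (le_add_of_nonneg_right (a := C) (mul_nonneg hs ht.le))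
    (le_refl D)).2
  rw [hD] at hlow
  rw [add_sub_cancel_left, sub_self, mul_zero, add_zero] at hup
  nlinarith [mul_nonneg hlam (sub_nonneg.2 hA), mul_lt_mul_of_pos_right hsN ht]

lemma IsLocalMax.hasDerivAt_deriv_nonpos {h h' : ℝ → ℝ} {h'' x₀ : ℝ} (hmax : IsLocalMax h x₀)
    (hh : ∀ᶠ x in 𝓝 x₀, HasDerivAt h (h' x) x) (hh' : HasDerivAt h' h'' x₀) : h'' ≤ 0 := by
  by_contra! hpos
  have hd : deriv h =ᶠ[𝓝 x₀] h' := hh.mono fun x hx => hx.deriv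
  -- a strict second-order minimum would make `h` locally constant, forcing `h'' = 0`
  have hmin : IsLocalMin h x₀ :=
    isLocalMin_of_deriv_deriv_pos (by rwa [hd.deriv_eq, hh'.deriv])
      (by rw [hd.eq_of_nhds]; exact hmax.hasDerivAt_eq_zero hh.self_of_nhds)
      hh.self_of_nhds.continuousAt
  have hconst : h =ᶠ[𝓝 x₀] fun _ => h x₀ :=
    (hmin.and hmax).mono fun x hx => le_antisymm hx.2 hx.1
  have hzero : h' =ᶠ[𝓝 x₀] fun _ => 0 :=
    (hconst.eventuallyEq_nhds.and hh).mono fun x hx =>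
      hx.2.unique ((hasDerivAt_const x (h x₀)).congr_of_eventuallyEq hx.1)
  exact hpos.ne' (hh'.unique ((hasDerivAt_const x₀ 0).congr_of_eventuallyEq hzero))

lemma exists_isLocalMax_of_tendsto_atBot {h : ℝ → ℝ} {a b r₁ : ℝ}
    (hcont : ContinuousOn h (Ioc a b)) (hbot : Tendsto h (𝓝[>] a) atBot)
    (hr₁ : r₁ ∈ Ioc a b) (hb : h b < h r₁) :
    ∃ r₀ ∈ Ioo a b, IsLocalMax h r₀ ∧ h r₁ ≤ h r₀ := by
  obtain ⟨c, hhc, hc⟩ :=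
    ((hbot.eventually (eventually_lt_atBot (h r₁))).and (Ioo_mem_nhdsGT hr₁.1)).exists
  obtain ⟨r₀, hr₀, hmax⟩ := isCompact_Icc.exists_isMaxOn (nonempty_Icc.2 (hc.2.le.trans hr₁.2))
    (hcont.mono (Icc_subset_Ioc hc.1 le_rfl))
  have hle : h r₁ ≤ h r₀ := hmax ⟨hc.2.le, hr₁.2⟩
  have hc₀ : c < r₀ := hr₀.1.lt_of_ne (by rintro rfl; linarith)
  have hb₀ : r₀ < b := hr₀.2.lt_of_ne (by rintro rfl; linarith)
  exact ⟨r₀, ⟨hc.1.trans hc₀, hb₀⟩, hmax.isLocalMax (Icc_mem_nhds hc₀ hb₀), hle⟩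

section TwiceDifferentiable

variable {𝕜 E : Type*} [NontriviallyNormedField 𝕜] [NormedAddCommGroup E] [NormedSpace 𝕜 E]
  {f : 𝕜 → E} {s : Set 𝕜} {x : 𝕜}

lemma ContDiffOn.eventually_differentiableAt (hf : ContDiffOn 𝕜 2 f s) (hs : IsOpen s)
    (hx : x ∈ s) : ∀ᶠ y in 𝓝 x, DifferentiableAt 𝕜 f y :=
  eventually_of_mem (hs.mem_nhds hx) fun _ hy =>
    (hf.differentiableOn two_ne_zero).differentiableAt (hs.mem_nhds hy)

lemma ContDiffOn.differentiableAt_deriv (hf : ContDiffOn 𝕜 2 f s) (hs : IsOpen s) (hx : x ∈ s) :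
    DifferentiableAt 𝕜 (deriv f) x :=
  ((hf.deriv_of_isOpen hs (m := 1) le_rfl).differentiableOn one_ne_zero).differentiableAt
    (hs.mem_nhds hx)

end TwiceDifferentiable

/-- At the maximum, the barrier shifts the angular entry by `t = δ ε r₀ ^ (-δ - 2)` and the radial
one by at most `(δ + 1) t`; ellipticity weighs these by `lam * (N - 1)` and `Lam`. -/
lemma UnifElliptic.radial_lt_of_isLocalMax_sub_barrier {N : ℕ} {lam Lam : ℝ}
    {F : Matrix (Fin N) (Fin N) ℝ → ℝ} (hF : UnifElliptic N lam Lam F) (hN : 1 ≤ N)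
    (hlam : 0 ≤ lam) {δ ε r₀ : ℝ} (hδ : 0 < δ) (hδN : Lam * (δ + 1) < lam * ((N : ℝ) - 1))
    (hε : 0 < ε) (hr₀ : 0 < r₀) {u v : ℝ → ℝ}
    (hu : ∀ᶠ r in 𝓝 r₀, DifferentiableAt ℝ u r) (hu' : DifferentiableAt ℝ (deriv u) r₀)
    (hv : ∀ᶠ r in 𝓝 r₀, DifferentiableAt ℝ v r) (hv' : DifferentiableAt ℝ (deriv v) r₀)
    (hmax : IsLocalMax (fun r => u r - v r - ε * r ^ (-δ)) r₀) :
    F (Dmat N (deriv (deriv u) r₀) (deriv u r₀ / r₀)) <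
      F (Dmat N (deriv (deriv v) r₀) (deriv v r₀ / r₀)) := by
  have hderiv : ∀ᶠ r in 𝓝 r₀, HasDerivAt (fun r => u r - v r - ε * r ^ (-δ))
      (deriv u r - deriv v r - ε * (-δ * r ^ (-δ - 1))) r :=
    ((hu.and hv).and (Ioi_mem_nhds hr₀)).mono fun r ⟨⟨hur, hvr⟩, hr⟩ =>
      (hur.hasDerivAt.sub hvr.hasDerivAt).sub
        ((hasDerivAt_rpow_const (Or.inl (ne_of_gt hr))).const_mul ε)
  have hfirst := hmax.hasDerivAt_eq_zero hderiv.self_of_nhds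
  have hsecond := hmax.hasDerivAt_deriv_nonpos hderiv
    ((hu'.hasDerivAt.sub hv'.hasDerivAt).sub
      (((hasDerivAt_rpow_const (Or.inl hr₀.ne')).const_mul (-δ)).const_mul ε))
  rw [rpow_sub_one hr₀.ne'] at hsecond
  refine hF.map_Dmat_lt hN hlam (s := δ + 1) (t := ε * δ * (r₀ ^ (-δ - 1) / r₀)) (by linarith)
    hδN (by positivity) (by linarith) ?_
  field_simp
  linarith

lemma exists_isLocalMax_sub_barrier {w : ℝ → ℝ} {ε δ r₁ : ℝ} (hw : ContinuousOn w (Icc 0 1))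
    (hε : 0 < ε) (hδ : 0 < δ) (hw₁ : w 1 ≤ 0) (hr₁ : r₁ ∈ Ioc 0 1) (hlt : ε * r₁ ^ (-δ) < w r₁) :
    ∃ r₀ ∈ Ioo 0 1, IsLocalMax (fun r => w r - ε * r ^ (-δ)) r₀ ∧ ε * r₀ ^ (-δ) < w r₀ := by
  have hcont : ContinuousOn (fun r => w r - ε * r ^ (-δ)) (Ioc 0 1) :=
    (hw.mono Ioc_subset_Icc_self).sub
      (continuousOn_const.mul (continuousOn_id.rpow_const fun r hr => Or.inl hr.1.ne'))
  have hw₀ : Tendsto w (𝓝[>] 0) (𝓝 (w 0)) :=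
    (hw 0 (left_mem_Icc.2 zero_le_one)).mono_of_mem_nhdsWithin
      (mem_of_superset (Ioo_mem_nhdsGT zero_lt_one) Ioo_subset_Icc_self)
  have hbot : Tendsto (fun r => w r - ε * r ^ (-δ)) (𝓝[>] 0) atBot :=
    hw₀.add_atBot (tendsto_neg_atTop_atBot.comp
      ((tendsto_rpow_neg_nhdsGT_zero (neg_lt_zero.2 hδ)).const_mul_atTop hε))
  obtain ⟨r₀, hr₀, hmax, hle⟩ :=
    exists_isLocalMax_of_tendsto_atBot hcont hbot hr₁ (by simp only [one_rpow]; linarith)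
  exact ⟨r₀, hr₀, hmax, by linarith⟩

theorem stmt10_general (N : ℕ) (hN : 2 ≤ N) (lam Lam : ℝ) (hlam : 0 < lam) (hlL : lam ≤ Lam)
    (hNp : 2 < lam / Lam * ((N : ℝ) - 1) + 1)
    (F : Matrix (Fin N) (Fin N) ℝ → ℝ)
    (hF1 : UnifElliptic N lam Lam F)
    (γ : ℝ) (β : ℝ) (hβ : 0 ≤ β)
    (f g : ℝ → ℝ)
    (hfg : ∀ r ∈ Ioo (0:ℝ) 1, g r ≤ f r)
    (u v : ℝ → ℝ)
    (huc : ContinuousOn u (Icc 0 1)) (hvc : ContinuousOn v (Icc 0 1))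
    (hu2 : ContDiffOn ℝ 2 u (Ioo 0 1)) (hv2 : ContDiffOn ℝ 2 v (Ioo 0 1))
    (husub : ∀ r ∈ Ioo (0:ℝ) 1,
      f r * r ^ (-γ) ≤
        F (Dmat N (deriv (deriv u) r) (deriv u r / r)) - β * u r * r ^ (-γ))
    (hvsup : ∀ r ∈ Ioo (0:ℝ) 1,
      F (Dmat N (deriv (deriv v) r) (deriv v r / r)) - β * v r * r ^ (-γ)
        ≤ g r * r ^ (-γ))
    (hbd : u 1 ≤ v 1) :
    ∀ r ∈ Icc (0:ℝ) 1, u r ≤ v r := by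
  have hN1 : 1 ≤ N := by omega
  have hLam : 0 < Lam := hlam.trans_le hlL
  -- any exponent `δ ∈ (0, Ñ₊ - 2)` makes `r ^ (-δ)` a usable barrier
  obtain ⟨δ, hδ, hδN⟩ : ∃ δ : ℝ, 0 < δ ∧ Lam * (δ + 1) < lam * ((N : ℝ) - 1) := by
    obtain ⟨s, hs₁, hs⟩ := exists_between (show 1 < lam / Lam * ((N : ℝ) - 1) by linarith)
    refine ⟨s - 1, by linarith, ?_⟩
    rwa [sub_add_cancel, ← lt_div_iff₀' hLam, ← div_mul_eq_mul_div]
  have hbarrier : ∀ ε > 0, ∀ r ∈ Ioc (0:ℝ) 1, u r - v r ≤ ε * r ^ (-δ) := by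
    intro ε hε
    by_contra! ⟨r₁, hr₁, hlt⟩
    obtain ⟨r₀, hr₀, hmax, hr₀pos⟩ := exists_isLocalMax_sub_barrier (w := fun r => u r - v r)
      (huc.sub hvc) hε hδ (sub_nonpos.2 hbd) hr₁ hlt
    have huv : v r₀ < u r₀ := by
      have : 0 < ε * r₀ ^ (-δ) := by have := hr₀.1; positivity
      linarith
    have hFlt := hF1.radial_lt_of_isLocalMax_sub_barrier hN1 hlam.le hδ hδN hε hr₀.1
      (hu2.eventually_differentiableAt isOpen_Ioo hr₀) (hu2.differentiableAt_deriv isOpen_Ioo hr₀)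
      (hv2.eventually_differentiableAt isOpen_Ioo hr₀) (hv2.differentiableAt_deriv isOpen_Ioo hr₀)
      hmax
    have hrγ : 0 < r₀ ^ (-γ) := by have := hr₀.1; positivity
    have hrhs : g r₀ * r₀ ^ (-γ) + β * v r₀ * r₀ ^ (-γ) ≤
        f r₀ * r₀ ^ (-γ) + β * u r₀ * r₀ ^ (-γ) := by
      gcongr
      exact hfg r₀ hr₀
    linarith [husub r₀ hr₀, hvsup r₀ hr₀]
  have hIoc : ∀ r ∈ Ioc (0:ℝ) 1, u r ≤ v r := fun r hr =>
    le_of_forall_pos_le_add fun e he => by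
      have hpos : 0 < r ^ (-δ) := by have := hr.1; positivity
      have := hbarrier (e / r ^ (-δ)) (by positivity) r hr
      rw [div_mul_cancel₀ _ hpos.ne'] at this
      linarith
  rw [← closure_Ioc zero_ne_one] at huc hvc ⊢
  exact le_on_closure hIoc huc hvc

theorem stmt10 (N : ℕ) (hN : 2 ≤ N) (lam Lam : ℝ) (hlam : 0 < lam) (hlL : lam ≤ Lam)
    (hNp : 2 < lam / Lam * ((N : ℝ) - 1) + 1)
    (F : Matrix (Fin N) (Fin N) ℝ → ℝ)
    (hF1 : UnifElliptic N lam Lam F) (hF2 : RotInvariant N F) (hF3 : PosHomog N F)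
    (γ : ℝ) (hγ0 : 0 < γ) (hγ2 : γ < 2) (β : ℝ) (hβ : 0 ≤ β)
    (f g : ℝ → ℝ) (hfc : ContinuousOn f (Ioo 0 1)) (hgc : ContinuousOn g (Ioo 0 1))
    (hfg : ∀ r ∈ Ioo (0:ℝ) 1, g r ≤ f r)
    (u v : ℝ → ℝ)
    (huc : ContinuousOn u (Icc 0 1)) (hvc : ContinuousOn v (Icc 0 1))
    (hu2 : ContDiffOn ℝ 2 u (Ioo 0 1)) (hv2 : ContDiffOn ℝ 2 v (Ioo 0 1))
    (husub : ∀ r ∈ Ioo (0:ℝ) 1,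
      f r * r ^ (-γ) ≤
        F (Dmat N (deriv (deriv u) r) (deriv u r / r)) - β * u r * r ^ (-γ))
    (hvsup : ∀ r ∈ Ioo (0:ℝ) 1,
      F (Dmat N (deriv (deriv v) r) (deriv v r / r)) - β * v r * r ^ (-γ)
        ≤ g r * r ^ (-γ))
    (hbd : u 1 ≤ v 1) :
    ∀ r ∈ Icc (0:ℝ) 1, u r ≤ v r :=
  stmt10_general N hN lam Lam hlam hlL hNp F hF1 γ β hβ f g hfg u v huc hvc hu2 hv2 husub hvsup hbd

end
end
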